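/- arXiv:math/0512283 — 5 statements merged into one kernel-verified Lean document; each statement's English description precedes it below -/
import Mathlib

section
/- Let n = 2m be an even integer with m ≥ 1. Then every maximal admissible subset of T°_n has exactly m elements, and the number of maximal admissible subsets of T°_n equals 2^{n−1}. -/
/-- Membership in `T°_n = {(i,j) : 1 ≤ i ≤ j ≤ n, i + j ≠ n + 1}`. -/
def TMem (n : ℕ) (p : ℕ × ℕ) : Prop :=
  1 ≤ p.1 ∧ p.1 ≤ p.2 ∧ p.2 ≤ n ∧ p.1 + p.2 ≠ n + 1

/-- The forbidden relation between two elements `(i,j)` and `(h,k)` of `T°_n`: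
(1) `a + b = n + 1` for some `a ∈ {i,j}`, `b ∈ {h,k}`, or (2) `i < h` and
`j < k`, or (3) `h < i` and `k < j`. -/
def SymBad (n : ℕ) (p q : ℕ × ℕ) : Prop :=
  (p.1 + q.1 = n + 1 ∨ p.1 + q.2 = n + 1 ∨ p.2 + q.1 = n + 1 ∨
    p.2 + q.2 = n + 1) ∨
  (p.1 < q.1 ∧ p.2 < q.2) ∨ (q.1 < p.1 ∧ q.2 < p.2)

/-- A subset `S ⊆ T°_n` is admissible if it contains no pair of distinct
elements related by `SymBad`. -/
def SymAdmissible (n : ℕ) (S : Finset (ℕ × ℕ)) : Prop :=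
  (∀ p ∈ S, TMem n p) ∧ ∀ p ∈ S, ∀ q ∈ S, p ≠ q → ¬ SymBad n p q

/-- A maximal admissible subset of `T°_n`. -/
def MaxSymAdmissible (n : ℕ) (S : Finset (ℕ × ℕ)) : Prop :=
  SymAdmissible n S ∧ ∀ T, SymAdmissible n T → S ⊆ T → S = T

namespace SymFacets

/-- chosen value of class `a` (classes are `{a+1, 2m-a}` for `a < m`). -/
def val (m : ℕ) (ε : Fin m → Bool) (a : Fin m) : ℕ :=
  if ε a then 2 * m - a else a + 1

/-- the set of chosen values -/
def Vs (m : ℕ) (ε : Fin m → Bool) : Finset ℕ :=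
  Finset.image (val m ε) Finset.univ

lemma val_spec (m : ℕ) (ε : Fin m → Bool) (a : Fin m) :
    (ε a = false ∧ val m ε a = a + 1 ∧ val m ε a ≤ m) ∨
    (ε a = true ∧ val m ε a = 2 * m - a ∧ m + 1 ≤ val m ε a) := by
  have := a.isLt
  unfold val
  cases h : ε a with
  | false => left; simp [h]
  | true => right; simp [h]; omega

lemma val_injective (m : ℕ) (ε : Fin m → Bool) : Function.Injective (val m ε) := by
  intro a b hab
  have ha := a.isLt; have hb := b.isLt
  rcases val_spec m ε a with ⟨_, e1, l1⟩ | ⟨_, e1, l1⟩ <;>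
    rcases val_spec m ε b with ⟨_, e2, l2⟩ | ⟨_, e2, l2⟩ <;>
      (apply Fin.ext; omega)

lemma cardVs (m : ℕ) (ε : Fin m → Bool) : (Vs m ε).card = m := by
  rw [Vs, Finset.card_image_of_injective _ (val_injective m ε), Finset.card_univ,
    Fintype.card_fin]

lemma mem_Vs_bounds (m : ℕ) (ε : Fin m → Bool) {x : ℕ} (hx : x ∈ Vs m ε) :
    1 ≤ x ∧ x ≤ 2 * m := by
  rcases Finset.mem_image.1 hx with ⟨a, -, rfl⟩
  have := a.isLt
  rcases val_spec m ε a with ⟨_, e, l⟩ | ⟨_, e, l⟩ <;> omega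

lemma Vs_no_compl (m : ℕ) (ε : Fin m → Bool) {x y : ℕ}
    (hx : x ∈ Vs m ε) (hy : y ∈ Vs m ε) : x + y ≠ 2 * m + 1 := by
  rcases Finset.mem_image.1 hx with ⟨a, -, rfl⟩
  rcases Finset.mem_image.1 hy with ⟨b, -, rfl⟩
  have ha := a.isLt; have hb := b.isLt
  rcases val_spec m ε a with ⟨ba, e1, l1⟩ | ⟨ba, e1, l1⟩ <;>
    rcases val_spec m ε b with ⟨bb, e2, l2⟩ | ⟨bb, e2, l2⟩
  · omega
  · -- small + large : (a+1) + (2m-b) = 2m+1 → a = b, contradiction ε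
    intro h
    have : a = b := by apply Fin.ext; omega
    rw [this] at ba; rw [ba] at bb; exact Bool.false_ne_true bb
  · intro h
    have : a = b := by apply Fin.ext; omega
    rw [this] at ba; rw [ba] at bb; exact Bool.false_ne_true bb.symm
  · omega

lemma Vs_cover (m : ℕ) (ε : Fin m → Bool) {x : ℕ} (h1 : 1 ≤ x) (h2 : x ≤ 2 * m) :
    x ∈ Vs m ε ∨ (2 * m + 1 - x) ∈ Vs m ε := by
  by_cases hx : x ≤ m
  · -- class a = x - 1
    have hlt : x - 1 < m := by omega
    rcases val_spec m ε ⟨x - 1, hlt⟩ with ⟨_, e, _⟩ | ⟨_, e, _⟩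
    · left
      have : x = val m ε ⟨x - 1, hlt⟩ := by simp at e; omega
      rw [this]; exact Finset.mem_image_of_mem _ (Finset.mem_univ _)
    · right
      have : 2 * m + 1 - x = val m ε ⟨x - 1, hlt⟩ := by simp at e; omega
      rw [this]; exact Finset.mem_image_of_mem _ (Finset.mem_univ _)
  · have hlt : 2 * m - x < m := by omega
    rcases val_spec m ε ⟨2 * m - x, hlt⟩ with ⟨_, e, _⟩ | ⟨_, e, _⟩
    · right
      have : 2 * m + 1 - x = val m ε ⟨2 * m - x, hlt⟩ := by simp at e; omega
      rw [this]; exact Finset.mem_image_of_mem _ (Finset.mem_univ _)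
    · left
      have : x = val m ε ⟨2 * m - x, hlt⟩ := by simp at e; omega
      rw [this]; exact Finset.mem_image_of_mem _ (Finset.mem_univ _)

lemma eps_eq_of_Vs (m : ℕ) (ε : Fin m → Bool) (a : Fin m) :
    ε a = true ↔ (2 * m - (a : ℕ)) ∈ Vs m ε := by
  constructor
  · intro h
    have : (2 : ℕ) * m - a = val m ε a := by simp [val, h]
    rw [this]; exact Finset.mem_image_of_mem _ (Finset.mem_univ _)
  · intro h
    rcases Finset.mem_image.1 h with ⟨b, -, hb⟩
    have ha := a.isLt; have hbl := b.isLt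
    rcases val_spec m ε b with ⟨bb, e, l⟩ | ⟨bb, e, l⟩
    · omega
    · have : a = b := by apply Fin.ext; omega
      rw [this]; exact bb

def Lc (dd : ℕ → Bool) (t : ℕ) : ℕ :=
  ((Finset.range t).filter (fun s => dd s = true)).card

lemma Lc_zero (dd) : Lc dd 0 = 0 := by simp [Lc]

lemma Lc_succ (dd) (t) : Lc dd (t + 1) = Lc dd t + (if dd t then 1 else 0) := by
  unfold Lc
  rw [Finset.range_add_one, Finset.filter_insert]
  by_cases h : dd t = true
  · simp [h, Finset.card_insert_of_notMem, Finset.mem_filter]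
  · simp [h]

lemma Lc_mono (dd) {t u : ℕ} (h : t ≤ u) : Lc dd t ≤ Lc dd u := by
  apply Finset.card_le_card
  apply Finset.filter_subset_filter
  exact Finset.range_subset_range.2 h

lemma Lc_le (dd) (t) : Lc dd t ≤ t := by
  calc Lc dd t ≤ (Finset.range t).card := Finset.card_filter_le _ _
  _ = t := Finset.card_range t

lemma Lc_sub_le (dd) {t u : ℕ} (h : t ≤ u) : Lc dd u - Lc dd t ≤ u - t := by
  induction u with
  | zero => simp [Lc_zero]
  | succ v ih =>
    rcases Nat.lt_or_ge t (v+1) with hl | hl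
    · have h1 := ih (by omega)
      have h2 : Lc dd t ≤ Lc dd v := Lc_mono dd (by omega)
      rw [Lc_succ]
      by_cases h' : dd v <;> simp [h'] <;> omega
    · have ht : t = v + 1 := by omega
      subst ht
      omega


/-- first index (row) of the `t`-th cell of the path -/
def ip (dd : ℕ → Bool) (m t : ℕ) : ℕ := Lc dd (m - 1) - Lc dd t

lemma ip_zero (dd m) : ip dd m 0 = Lc dd (m - 1) := by simp [ip, Lc_zero]

lemma ip_last (dd m) : ip dd m (m - 1) = 0 := by simp [ip]

lemma ip_le (dd m t) : ip dd m t ≤ m - 1 := by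
  have := Lc_le dd (m - 1); unfold ip; omega

lemma ip_antitone (dd m) {t u : ℕ} (h : t ≤ u) : ip dd m u ≤ ip dd m t := by
  have := Lc_mono dd h; unfold ip; omega

lemma ip_lipschitz (dd m t) : ip dd m t ≤ ip dd m (t + 1) + 1 := by
  have h1 := Lc_succ dd t
  unfold ip
  by_cases h : dd t <;> simp [h] at h1 <;> omega

lemma jp_mono (dd : ℕ → Bool) (m : ℕ) {a b : ℕ} (h : a ≤ b) :
    ip dd m a + a ≤ ip dd m b + b := by
  induction b with
  | zero => have ha : a = 0 := by omega
            subst ha; exact le_refl _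
  | succ v ih =>
    rcases Nat.lt_or_ge a (v + 1) with h' | h'
    · have step := ip_lipschitz dd m v
      have := ih (by omega)
      omega
    · have ha : a = v + 1 := by omega
      subst ha; exact le_refl _

lemma jp_le (dd m) {t : ℕ} (h : t ≤ m - 1) : ip dd m t + t ≤ m - 1 := by
  have h1 := Lc_sub_le dd h
  have h2 := Lc_mono dd h
  unfold ip; omega

lemma exists_ip (dd m) {r : ℕ} (hm : 1 ≤ m) (hr : r ≤ Lc dd (m - 1)) :
    ∃ t ≤ m - 1, ip dd m t = r := by
  have hP : ∃ t, ip dd m t ≤ r := ⟨m - 1, by rw [ip_last]; omega⟩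
  classical
  set t₀ := Nat.find hP with ht₀
  have hspec : ip dd m t₀ ≤ r := Nat.find_spec hP
  have hle : t₀ ≤ m - 1 := Nat.find_le (by rw [ip_last]; omega)
  rcases Nat.eq_zero_or_pos t₀ with h0 | h0
  · refine ⟨0, by omega, ?_⟩
    rw [h0] at hspec
    have h1 : ip dd m 0 = Lc dd (m - 1) := ip_zero dd m
    omega
  · have hmin : ¬ ip dd m (t₀ - 1) ≤ r := Nat.find_min hP (by omega)
    have hlip := ip_lipschitz dd m (t₀ - 1)
    have : t₀ - 1 + 1 = t₀ := by omega
    rw [this] at hlip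
    exact ⟨t₀, hle, by omega⟩

lemma exists_jp (dd m) {r : ℕ} (hm : 1 ≤ m) (hr1 : Lc dd (m - 1) ≤ r)
    (hr2 : r ≤ m - 1) : ∃ t ≤ m - 1, ip dd m t + t = r := by
  have hlast : ip dd m (m - 1) + (m - 1) = m - 1 := by rw [ip_last]; omega
  have hP : ∃ t, r ≤ ip dd m t + t := ⟨m - 1, by omega⟩
  classical
  set t₀ := Nat.find hP with ht₀
  have hspec : r ≤ ip dd m t₀ + t₀ := Nat.find_spec hP
  have hle : t₀ ≤ m - 1 := Nat.find_le (by omega)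
  rcases Nat.eq_zero_or_pos t₀ with h0 | h0
  · refine ⟨0, by omega, ?_⟩
    rw [h0] at hspec
    have h1 : ip dd m 0 = Lc dd (m - 1) := ip_zero dd m
    omega
  · have hmin : ¬ r ≤ ip dd m (t₀ - 1) + (t₀ - 1) := Nat.find_min hP (by omega)
    have hmono : ip dd m t₀ ≤ ip dd m (t₀ - 1) := ip_antitone dd m (by omega)
    exact ⟨t₀, hle, by omega⟩


/-- the `x`-th smallest chosen value -/
def w (m : ℕ) (ε : Fin m → Bool) (x : ℕ) : ℕ :=
  if h : x < m then (Vs m ε).orderEmbOfFin (cardVs m ε) ⟨x, h⟩ else 0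

lemma w_mem (m ε) {x : ℕ} (h : x < m) : w m ε x ∈ Vs m ε := by
  rw [w, dif_pos h]; exact Finset.orderEmbOfFin_mem _ _ _

lemma w_strictmono (m ε) {x y : ℕ} (hxy : x < y) (hy : y < m) :
    w m ε x < w m ε y := by
  have hx : x < m := lt_trans hxy hy
  rw [w, dif_pos hx, w, dif_pos hy]
  exact (Finset.orderEmbOfFin _ _).strictMono (by exact hxy)

lemma w_mono (m ε) {x y : ℕ} (hxy : x ≤ y) (hy : y < m) :
    w m ε x ≤ w m ε y := by
  rcases Nat.lt_or_ge x y with h | h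
  · exact le_of_lt (w_strictmono m ε h hy)
  · have : x = y := by omega
    rw [this]

lemma w_inj (m ε) {x y : ℕ} (hx : x < m) (hy : y < m)
    (h : w m ε x = w m ε y) : x = y := by
  rcases Nat.lt_trichotomy x y with hl | he | hl
  · exact absurd h (ne_of_lt (w_strictmono m ε hl hy))
  · exact he
  · exact absurd h.symm (ne_of_lt (w_strictmono m ε hl hx))

lemma w_surj (m ε) {v : ℕ} (hv : v ∈ Vs m ε) : ∃ x, x < m ∧ w m ε x = v := by
  have : v ∈ Set.range ((Vs m ε).orderEmbOfFin (cardVs m ε)) := by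
    rw [Finset.range_orderEmbOfFin]; exact_mod_cast hv
  rcases this with ⟨⟨x, hx⟩, hxv⟩
  exact ⟨x, hx, by rw [w, dif_pos hx]; exact hxv⟩

/-- extend `d : Fin (m-1) → Bool` to `ℕ → Bool` -/
def dext (m : ℕ) (d : Fin (m - 1) → Bool) : ℕ → Bool :=
  fun s => if h : s < m - 1 then d ⟨s, h⟩ else false

/-- the `t`-th cell of the facet determined by `(ε, d)` -/
def cell (m : ℕ) (ε : Fin m → Bool) (d : Fin (m - 1) → Bool) (t : ℕ) : ℕ × ℕ :=
  (w m ε (ip (dext m d) m t), w m ε (ip (dext m d) m t + t))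

/-- the facet determined by `(ε, d)` -/
def F (m : ℕ) (ε : Fin m → Bool) (d : Fin (m - 1) → Bool) : Finset (ℕ × ℕ) :=
  (Finset.range m).image (cell m ε d)

lemma cell_fst_lt (m : ℕ) (d : Fin (m-1) → Bool) {t : ℕ} (ht : t < m) : ip (dext m d) m t < m := by
  have := ip_le (dext m d) m t; omega

lemma cell_snd_lt (m : ℕ) (d : Fin (m-1) → Bool) {t : ℕ} (ht : t < m) : ip (dext m d) m t + t < m := by
  have := jp_le (dext m d) m (show t ≤ m - 1 by omega); omega

lemma cell_TMem (m ε d) {t : ℕ} (ht : t < m) : TMem (2 * m) (cell m ε d t) := by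
  have h1 := cell_fst_lt m d ht
  have h2 := cell_snd_lt m d ht
  have hm1 := mem_Vs_bounds m ε (w_mem m ε h1)
  have hm2 := mem_Vs_bounds m ε (w_mem m ε h2)
  refine ⟨hm1.1, w_mono m ε (by omega) h2, hm2.2, ?_⟩
  exact Vs_no_compl m ε (w_mem m ε h1) (w_mem m ε h2)

lemma cell_inj (m ε d) {s t : ℕ} (hs : s < m) (ht : t < m)
    (h : cell m ε d s = cell m ε d t) : s = t := by
  have h1 : w m ε (ip (dext m d) m s) = w m ε (ip (dext m d) m t) := congrArg Prod.fst h
  have h2 : w m ε (ip (dext m d) m s + s) = w m ε (ip (dext m d) m t + t) :=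
    congrArg Prod.snd h
  have e1 := w_inj m ε (cell_fst_lt m d hs) (cell_fst_lt m d ht) h1
  have e2 := w_inj m ε (cell_snd_lt m d hs) (cell_snd_lt m d ht) h2
  omega

lemma F_card (m ε d) : (F m ε d).card = m := by
  rw [F, Finset.card_image_of_injOn, Finset.card_range]
  intro s hs t ht h
  exact cell_inj m ε d (Finset.mem_range.1 hs) (Finset.mem_range.1 ht) h

lemma F_noBad (m ε d) {s t : ℕ} (hs : s < m) (ht : t < m) (hne : s ≠ t) :
    ¬ SymBad (2 * m) (cell m ε d s) (cell m ε d t) := by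
  intro hbad
  have hfs := cell_fst_lt m d hs
  have hss := cell_snd_lt m d hs
  have hft := cell_fst_lt m d ht
  have hst := cell_snd_lt m d ht
  rcases hbad with hsum | hcomp | hcomp
  · rcases hsum with h | h | h | h <;>
    exact absurd h (Vs_no_compl m ε (w_mem m ε (by assumption)) (w_mem m ε (by assumption)))
  · -- cell s strictly below cell t in both coords
    rcases Nat.lt_or_ge s t with hlt | hge
    · have : ip (dext m d) m t ≤ ip (dext m d) m s := ip_antitone _ _ (le_of_lt hlt)
      exact absurd hcomp.1 (not_lt.2 (w_mono m ε this hfs))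
    · have hlt : t < s := by omega
      have : ip (dext m d) m t + t ≤ ip (dext m d) m s + s :=
        jp_mono (dext m d) m (le_of_lt hlt)
      exact absurd hcomp.2 (not_lt.2 (w_mono m ε this hss))
  · -- cell t strictly below cell s in both coords
    rcases Nat.lt_or_ge s t with hlt | hge
    · have : ip (dext m d) m s + s ≤ ip (dext m d) m t + t :=
        jp_mono (dext m d) m (le_of_lt hlt)
      exact absurd hcomp.2 (not_lt.2 (w_mono m ε this hst))
    · have hlt : t < s := by omega
      have : ip (dext m d) m s ≤ ip (dext m d) m t := ip_antitone _ _ (le_of_lt hlt)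
      exact absurd hcomp.1 (not_lt.2 (w_mono m ε this hft))

lemma F_admissible (m ε d) : SymAdmissible (2 * m) (F m ε d) := by
  constructor
  · intro p hp
    rcases Finset.mem_image.1 hp with ⟨t, ht, rfl⟩
    exact cell_TMem m ε d (Finset.mem_range.1 ht)
  · intro p hp q hq hpq
    rcases Finset.mem_image.1 hp with ⟨s, hs, rfl⟩
    rcases Finset.mem_image.1 hq with ⟨t, ht, rfl⟩
    have hst : s ≠ t := fun h => hpq (by rw [h])
    exact F_noBad m ε d (Finset.mem_range.1 hs) (Finset.mem_range.1 ht) hst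


lemma F_covers (m : ℕ) (ε : Fin m → Bool) (d : Fin (m-1) → Bool) (hm : 1 ≤ m)
    {v : ℕ} (hv : v ∈ Vs m ε) :
    ∃ t, t < m ∧ ((cell m ε d t).1 = v ∨ (cell m ε d t).2 = v) := by
  rcases w_surj m ε hv with ⟨r, hr, rfl⟩
  rcases le_or_gt r (Lc (dext m d) (m - 1)) with h | h
  · rcases exists_ip (dext m d) m hm h with ⟨t, ht, hip⟩
    refine ⟨t, by omega, Or.inl ?_⟩
    show w m ε (ip (dext m d) m t) = w m ε r
    rw [hip]
  · rcases exists_jp (dext m d) m hm (le_of_lt h) (by omega) with ⟨t, ht, hjp⟩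
    refine ⟨t, by omega, Or.inr ?_⟩
    show w m ε (ip (dext m d) m t + t) = w m ε r
    rw [hjp]

lemma F_mem_cell (m : ℕ) (ε : Fin m → Bool) (d : Fin (m-1) → Bool) {t : ℕ}
    (ht : t < m) : cell m ε d t ∈ F m ε d :=
  Finset.mem_image_of_mem _ (Finset.mem_range.2 ht)

lemma F_max (m : ℕ) (ε : Fin m → Bool) (d : Fin (m-1) → Bool) (hm : 1 ≤ m) :
    MaxSymAdmissible (2 * m) (F m ε d) := by
  refine ⟨F_admissible m ε d, ?_⟩
  intro T hT hsub
  apply Finset.Subset.antisymm hsub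
  intro q hq
  by_contra hqF
  obtain ⟨hTmem, hTbad⟩ := hT
  obtain ⟨hq1, hq12, hq2, hqsum⟩ := hTmem q hq
  -- both coordinates of q lie in Vs
  have hcoord : ∀ x : ℕ, 1 ≤ x → x ≤ 2 * m → (x = q.1 ∨ x = q.2) → x ∈ Vs m ε := by
    intro x hx1 hx2 hxq
    rcases Vs_cover m ε hx1 hx2 with hmem | hmem
    · exact hmem
    · exfalso
      rcases F_covers m ε d hm hmem with ⟨t, ht, hc⟩
      have hcell := F_mem_cell m ε d ht
      have hne : q ≠ cell m ε d t := by
        intro h; rw [h] at hqF; exact hqF hcell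
      apply hTbad q hq (cell m ε d t) (hsub hcell) hne
      left
      rcases hxq with rfl | rfl <;> rcases hc with hc | hc
      · left; omega
      · right; left; omega
      · right; right; left; omega
      · right; right; right; omega
  have hx : q.1 ∈ Vs m ε := hcoord q.1 hq1 (by omega) (Or.inl rfl)
  have hy : q.2 ∈ Vs m ε := hcoord q.2 (by omega) hq2 (Or.inr rfl)
  rcases w_surj m ε hx with ⟨rx, hrx, hwx⟩
  rcases w_surj m ε hy with ⟨ry, hry, hwy⟩
  have hrxy : rx ≤ ry := by
    by_contra hcon
    have := w_strictmono m ε (show ry < rx by omega) hrx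
    omega
  set δ := ry - rx with hδ
  have hδm : δ < m := by omega
  set i := ip (dext m d) m δ with hi
  have him : i < m := cell_fst_lt m d hδm
  have hjm : i + δ < m := cell_snd_lt m d hδm
  have hcell := F_mem_cell m ε d hδm
  have hne : q ≠ cell m ε d δ := by
    intro h; rw [h] at hqF; exact hqF hcell
  rcases Nat.lt_trichotomy rx i with hlt | heq | hlt
  · -- q strictly smaller in both coordinates than cell δ
    apply hTbad q hq (cell m ε d δ) (hsub hcell) hne
    right; left
    constructor
    · show q.1 < w m ε i
      rw [← hwx]; exact w_strictmono m ε hlt him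
    · show q.2 < w m ε (i + δ)
      rw [← hwy]; exact w_strictmono m ε (by omega) hjm
  · -- q equals cell δ
    apply hqF
    have e1 : q.1 = w m ε (ip (dext m d) m δ) := by
      rw [← hi, ← heq, hwx]
    have e2 : q.2 = w m ε (ip (dext m d) m δ + δ) := by
      have hr : rx + δ = ry := by omega
      rw [← hi, ← heq, hr, hwy]
    have hqc : q = cell m ε d δ := by
      rw [cell]; exact Prod.ext_iff.2 ⟨e1, e2⟩
    rw [hqc]; exact hcell
  · -- cell δ strictly smaller in both coordinates than q
    apply hTbad q hq (cell m ε d δ) (hsub hcell) hne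
    right; right
    constructor
    · show w m ε i < q.1
      rw [← hwx]; exact w_strictmono m ε hlt hrx
    · show w m ε (i + δ) < q.2
      rw [← hwy]; exact w_strictmono m ε (by omega) hry

lemma coords_Vs (m : ℕ) (ε : Fin m → Bool) (d : Fin (m-1) → Bool) (hm : 1 ≤ m) :
    (F m ε d).image Prod.fst ∪ (F m ε d).image Prod.snd = Vs m ε := by
  apply Finset.Subset.antisymm
  · intro v hv
    rcases Finset.mem_union.1 hv with h | h
    · rcases Finset.mem_image.1 h with ⟨p, hp, rfl⟩
      rcases Finset.mem_image.1 hp with ⟨t, ht, rfl⟩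
      exact w_mem m ε (cell_fst_lt m d (Finset.mem_range.1 ht))
    · rcases Finset.mem_image.1 h with ⟨p, hp, rfl⟩
      rcases Finset.mem_image.1 hp with ⟨t, ht, rfl⟩
      exact w_mem m ε (cell_snd_lt m d (Finset.mem_range.1 ht))
  · intro v hv
    rcases F_covers m ε d hm hv with ⟨t, ht, hc | hc⟩
    · exact Finset.mem_union_left _
        (Finset.mem_image.2 ⟨cell m ε d t, F_mem_cell m ε d ht, hc⟩)
    · exact Finset.mem_union_right _
        (Finset.mem_image.2 ⟨cell m ε d t, F_mem_cell m ε d ht, hc⟩)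

lemma F_inj (m : ℕ) (hm : 1 ≤ m) :
    Function.Injective
      (fun p : (Fin m → Bool) × (Fin (m - 1) → Bool) => F m p.1 p.2) := by
  rintro ⟨ε, d⟩ ⟨ε', d'⟩ hF
  simp only at hF
  have hVs : Vs m ε = Vs m ε' := by
    rw [← coords_Vs m ε d hm, ← coords_Vs m ε' d' hm, hF]
  have hε : ε = ε' := by
    funext a
    have h1 := eps_eq_of_Vs m ε a
    have h2 := eps_eq_of_Vs m ε' a
    rw [hVs] at h1
    have hiff : ε a = true ↔ ε' a = true := h1.trans h2.symm
    cases hb : ε a <;> cases hb' : ε' a <;> rw [hb, hb'] at hiff <;> simp at hiff <;> rfl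
  subst hε
  have hcell : ∀ t, t < m → ip (dext m d) m t = ip (dext m d') m t := by
    intro t ht
    have h1 : cell m ε d t ∈ F m ε d' := by rw [← hF]; exact F_mem_cell m ε d ht
    rcases Finset.mem_image.1 h1 with ⟨s, hs, hcs⟩
    have hs' := Finset.mem_range.1 hs
    have e1 : w m ε (ip (dext m d') m s) = w m ε (ip (dext m d) m t) :=
      congrArg Prod.fst hcs
    have e2 : w m ε (ip (dext m d') m s + s) = w m ε (ip (dext m d) m t + t) :=
      congrArg Prod.snd hcs
    have i1 := w_inj m ε (cell_fst_lt m d' hs') (cell_fst_lt m d ht) e1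
    have i2 := w_inj m ε (cell_snd_lt m d' hs') (cell_snd_lt m d ht) e2
    have hst : s = t := by omega
    subst hst
    omega
  have hLc : ∀ t, t ≤ m - 1 → Lc (dext m d) t = Lc (dext m d') t := by
    intro t ht
    have h := hcell t (by omega)
    have l1 := Lc_mono (dext m d) ht
    have l2 := Lc_mono (dext m d') ht
    have hK := hcell 0 hm
    rw [ip_zero, ip_zero] at hK
    unfold ip at h
    omega
  have hd : d = d' := by
    funext t
    have htl : (t : ℕ) < m - 1 := t.isLt
    have e1 := Lc_succ (dext m d) (t : ℕ)
    have e2 := Lc_succ (dext m d') (t : ℕ)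
    have g1 := hLc (t : ℕ) (by omega)
    have g2 := hLc ((t : ℕ) + 1) (by omega)
    have hdd : dext m d (t : ℕ) = dext m d' (t : ℕ) := by
      cases hb : dext m d (t : ℕ) <;> cases hb' : dext m d' (t : ℕ) <;>
        rw [hb] at e1 <;> rw [hb'] at e2 <;> simp at e1 e2 <;> omega
    have u1 : dext m d (t : ℕ) = d t := by
      rw [dext]; simp only [dif_pos htl]
    have u2 : dext m d' (t : ℕ) = d' t := by
      rw [dext]; simp only [dif_pos htl]
    rw [← u1, ← u2, hdd]
  rw [hd]


/-! ### Surjectivity: structure of an arbitrary maximal admissible set -/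

/-- the set of coordinates of elements of `S` -/
def VSet (S : Finset (ℕ × ℕ)) : Finset ℕ :=
  S.image Prod.fst ∪ S.image Prod.snd

lemma mem_VSet_fst {S : Finset (ℕ × ℕ)} {p : ℕ × ℕ} (hp : p ∈ S) : p.1 ∈ VSet S :=
  Finset.mem_union_left _ (Finset.mem_image_of_mem _ hp)

lemma mem_VSet_snd {S : Finset (ℕ × ℕ)} {p : ℕ × ℕ} (hp : p ∈ S) : p.2 ∈ VSet S :=
  Finset.mem_union_right _ (Finset.mem_image_of_mem _ hp)

lemma VSet_cases {S : Finset (ℕ × ℕ)} {x : ℕ} (hx : x ∈ VSet S) :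
    ∃ p ∈ S, x = p.1 ∨ x = p.2 := by
  rcases Finset.mem_union.1 hx with h | h
  · rcases Finset.mem_image.1 h with ⟨p, hp, rfl⟩; exact ⟨p, hp, Or.inl rfl⟩
  · rcases Finset.mem_image.1 h with ⟨p, hp, rfl⟩; exact ⟨p, hp, Or.inr rfl⟩

/-- any two elements of an admissible set are nested intervals -/
lemma chain_of_adm {m : ℕ} {S : Finset (ℕ × ℕ)} (hadm : SymAdmissible (2 * m) S)
    {p q : ℕ × ℕ} (hp : p ∈ S) (hq : q ∈ S) :
    (q.1 ≤ p.1 ∧ p.2 ≤ q.2) ∨ (p.1 ≤ q.1 ∧ q.2 ≤ p.2) := by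
  by_cases hpq : p = q
  · subst hpq; left; exact ⟨le_refl _, le_refl _⟩
  · have hbad := hadm.2 p hp q hq hpq
    unfold SymBad at hbad
    omega

/-- no two coordinates of an admissible set sum to `2m+1` -/
lemma sum_ne_of_adm {m : ℕ} {S : Finset (ℕ × ℕ)} (hadm : SymAdmissible (2 * m) S)
    {p q : ℕ × ℕ} (hp : p ∈ S) (hq : q ∈ S) {a b : ℕ}
    (ha : a = p.1 ∨ a = p.2) (hb : b = q.1 ∨ b = q.2) : a + b ≠ 2 * m + 1 := by
  by_cases hpq : p = q
  · subst hpq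
    have ht := hadm.1 p hp
    unfold TMem at ht
    omega
  · have hbad := hadm.2 p hp q hq hpq
    unfold SymBad at hbad
    omega

/-- criterion for inserting a new interval into an admissible set -/
lemma insert_adm {m : ℕ} {S : Finset (ℕ × ℕ)} (hadm : SymAdmissible (2 * m) S)
    {J : ℕ × ℕ} (hJT : TMem (2 * m) J)
    (hnest : ∀ q ∈ S, (q.1 ≤ J.1 ∧ J.2 ≤ q.2) ∨ (J.1 ≤ q.1 ∧ q.2 ≤ J.2))
    (hsum : ∀ q ∈ S, ∀ b, (b = q.1 ∨ b = q.2) →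
      J.1 + b ≠ 2 * m + 1 ∧ J.2 + b ≠ 2 * m + 1) :
    SymAdmissible (2 * m) (insert J S) := by
  constructor
  · intro p hp
    rcases Finset.mem_insert.1 hp with rfl | hp
    · exact hJT
    · exact hadm.1 p hp
  · intro p hp q hq hpq
    rcases Finset.mem_insert.1 hp with rfl | hp' <;>
      rcases Finset.mem_insert.1 hq with rfl | hq'
    · exact absurd rfl hpq
    · intro hbad
      have h1 := hnest q hq'
      have h2 := hsum q hq' q.1 (Or.inl rfl)
      have h3 := hsum q hq' q.2 (Or.inr rfl)
      unfold SymBad at hbad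
      omega
    · intro hbad
      have h1 := hnest p hp'
      have h2 := hsum p hp' p.1 (Or.inl rfl)
      have h3 := hsum p hp' p.2 (Or.inr rfl)
      unfold SymBad at hbad
      omega
    · exact hadm.2 p hp' q hq' hpq

/-- every class contains a coordinate of a maximal admissible set -/
lemma cover_VSet {m : ℕ} {S : Finset (ℕ × ℕ)} (hm : 1 ≤ m)
    (hS : MaxSymAdmissible (2 * m) S) {c : ℕ} (hc : c < m) :
    c + 1 ∈ VSet S ∨ 2 * m - c ∈ VSet S := by
  by_contra hcon
  push_neg at hcon
  obtain ⟨hv1, hv2⟩ := hcon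
  obtain ⟨hadm, hmax⟩ := hS
  set v := c + 1 with hv
  have hsumgen : ∀ q ∈ S, ∀ b, (b = q.1 ∨ b = q.2) → v + b ≠ 2 * m + 1 := by
    intro q hq b hb hsum
    apply hv2
    have : 2 * m - c = b := by omega
    rw [this]
    rcases hb with rfl | rfl
    · exact mem_VSet_fst hq
    · exact mem_VSet_snd hq
  have hTbounds : ∀ q ∈ S, 1 ≤ q.1 ∧ q.1 ≤ q.2 ∧ q.2 ≤ 2 * m := by
    intro q hq; have := hadm.1 q hq; exact ⟨this.1, this.2.1, this.2.2.1⟩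
  classical
  set Sout := S.filter (fun p => v < p.1 ∨ p.2 < v) with hSout
  have notmemS : ∀ J : ℕ × ℕ, (J.1 = v ∨ J.2 = v) → J ∉ S := by
    intro J hJv hJS
    apply hv1
    rcases hJv with h | h
    · rw [← h]; exact mem_VSet_fst hJS
    · rw [← h]; exact mem_VSet_snd hJS
  rcases Finset.eq_empty_or_nonempty Sout with hout | hout
  · -- every element of S contains v : insert (v, v)
    have hall : ∀ p ∈ S, p.1 ≤ v ∧ v ≤ p.2 := by
      intro p hp
      have : p ∉ Sout := by rw [hout]; exact Finset.notMem_empty _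
      rw [hSout, Finset.mem_filter] at this
      push_neg at this
      have := this hp
      omega
    have hJT : TMem (2 * m) (v, v) := by
      refine ⟨by omega, le_refl _, by omega, by omega⟩
    have hadm' : SymAdmissible (2 * m) (insert (v, v) S) := by
      apply insert_adm hadm hJT
      · intro q hq
        have := hall q hq
        left; exact ⟨this.1, this.2⟩
      · intro q hq b hb
        have := hsumgen q hq b hb
        exact ⟨this, this⟩
    have heq := hmax _ hadm' (Finset.subset_insert _ _)
    exact notmemS (v, v) (Or.inl rfl) (heq ▸ Finset.mem_insert_self _ _)
  · -- take the maximal interval not containing v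
    obtain ⟨p', hp'S, hp'max⟩ := Finset.exists_max_image Sout (fun p => p.2 - p.1) hout
    have hp'mem : p' ∈ S := (Finset.mem_filter.1 hp'S).1
    have hp'out : v < p'.1 ∨ p'.2 < v := (Finset.mem_filter.1 hp'S).2
    have hp'b := hTbounds p' hp'mem
    -- nesting of the new interval J with all elements of S
    have hnest : ∀ (J : ℕ × ℕ), (J.1 = v ∧ J.2 = p'.2 ∧ v < p'.1) ∨
        (J.1 = p'.1 ∧ J.2 = v ∧ p'.2 < v) →
        ∀ q ∈ S, (q.1 ≤ J.1 ∧ J.2 ≤ q.2) ∨ (J.1 ≤ q.1 ∧ q.2 ≤ J.2) := by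
      intro J hJ q hq
      have hchain := chain_of_adm hadm hp'mem hq
      have hqb := hTbounds q hq
      by_cases hqo : v < q.1 ∨ q.2 < v
      · have hlen := hp'max q (Finset.mem_filter.2 ⟨hq, hqo⟩)
        omega
      · push_neg at hqo
        omega
    have hsumJ : ∀ (J : ℕ × ℕ), (J.1 = v ∧ J.2 = p'.2) ∨ (J.1 = p'.1 ∧ J.2 = v) →
        ∀ q ∈ S, ∀ b, (b = q.1 ∨ b = q.2) →
        J.1 + b ≠ 2 * m + 1 ∧ J.2 + b ≠ 2 * m + 1 := by
      intro J hJ q hq b hb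
      have h1 := hsumgen q hq b hb
      have h2 : p'.1 + b ≠ 2 * m + 1 := sum_ne_of_adm hadm hp'mem hq (Or.inl rfl) hb
      have h3 : p'.2 + b ≠ 2 * m + 1 := sum_ne_of_adm hadm hp'mem hq (Or.inr rfl) hb
      rcases hJ with ⟨e1, e2⟩ | ⟨e1, e2⟩ <;> rw [e1, e2] <;> exact ⟨by omega, by omega⟩
    rcases hp'out with hcase | hcase
    · -- J = (v, p'.2)
      have hJT : TMem (2 * m) (v, p'.2) := by
        refine ⟨by omega, by omega, by omega, ?_⟩
        show v + p'.2 ≠ 2 * m + 1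
        exact hsumgen p' hp'mem p'.2 (Or.inr rfl)
      have hadm' : SymAdmissible (2 * m) (insert (v, p'.2) S) := by
        apply insert_adm hadm hJT
        · exact hnest _ (Or.inl ⟨rfl, rfl, hcase⟩)
        · exact hsumJ _ (Or.inl ⟨rfl, rfl⟩)
      have heq := hmax _ hadm' (Finset.subset_insert _ _)
      exact notmemS (v, p'.2) (Or.inl rfl) (heq ▸ Finset.mem_insert_self _ _)
    · -- J = (p'.1, v)
      have hJT : TMem (2 * m) (p'.1, v) := by
        refine ⟨by omega, by omega, by omega, ?_⟩
        show p'.1 + v ≠ 2 * m + 1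
        have := hsumgen p' hp'mem p'.1 (Or.inl rfl)
        omega
      have hadm' : SymAdmissible (2 * m) (insert (p'.1, v) S) := by
        apply insert_adm hadm hJT
        · exact hnest _ (Or.inr ⟨rfl, rfl, hcase⟩)
        · exact hsumJ _ (Or.inr ⟨rfl, rfl⟩)
      have heq := hmax _ hadm' (Finset.subset_insert _ _)
      exact notmemS (p'.1, v) (Or.inr rfl) (heq ▸ Finset.mem_insert_self _ _)


/-- chosen-value pattern determined by a set -/
def epsOf (m : ℕ) (S : Finset (ℕ × ℕ)) : Fin m → Bool :=
  fun a => decide ((2 * m - (a : ℕ)) ∈ VSet S)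

lemma VSet_eq_Vs {m : ℕ} {S : Finset (ℕ × ℕ)} (hm : 1 ≤ m)
    (hS : MaxSymAdmissible (2 * m) S) : Vs m (epsOf m S) = VSet S := by
  apply Finset.Subset.antisymm
  · intro x hx
    rcases Finset.mem_image.1 hx with ⟨a, -, rfl⟩
    have ha := a.isLt
    rcases val_spec m (epsOf m S) a with ⟨hb, he, -⟩ | ⟨hb, he, -⟩
    · rcases cover_VSet hm hS ha with h | h
      · rw [he]; exact h
      · exfalso
        have : epsOf m S a = true := decide_eq_true h
        rw [this] at hb; exact absurd hb (by simp)
    · rw [he]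
      exact of_decide_eq_true hb
  · intro x hx
    rcases VSet_cases hx with ⟨p, hp, hxp⟩
    have hb := hS.1.1 p hp
    have hx1 : 1 ≤ x := by unfold TMem at hb; omega
    have hx2 : x ≤ 2 * m := by unfold TMem at hb; omega
    by_cases hxm : x ≤ m
    · have hlt : x - 1 < m := by omega
      have hdec : epsOf m S ⟨x - 1, hlt⟩ = false := by
        apply decide_eq_false
        intro hmem
        rcases VSet_cases hmem with ⟨q, hq, hxq⟩
        have : x + (2 * m - (x - 1)) = 2 * m + 1 := by omega
        exact sum_ne_of_adm hS.1 hp hq hxp (by exact_mod_cast hxq) this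
      rcases val_spec m (epsOf m S) ⟨x - 1, hlt⟩ with ⟨-, he, -⟩ | ⟨hb', -, -⟩
      · have : val m (epsOf m S) ⟨x - 1, hlt⟩ = x := by
          rw [he]; simp; omega
        rw [← this]
        exact Finset.mem_image_of_mem _ (Finset.mem_univ _)
      · rw [hdec] at hb'; exact absurd hb' (by simp)
    · have hlt : 2 * m - x < m := by omega
      have hxeq : 2 * m - (2 * m - x : ℕ) = x := by omega
      have hdec : epsOf m S ⟨2 * m - x, hlt⟩ = true := by
        apply decide_eq_true
        show (2 * m - ((⟨2 * m - x, hlt⟩ : Fin m) : ℕ)) ∈ VSet S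
        simp only
        rw [hxeq]
        exact hx
      rcases val_spec m (epsOf m S) ⟨2 * m - x, hlt⟩ with ⟨hb', -, -⟩ | ⟨-, he, -⟩
      · rw [hdec] at hb'; exact absurd hb' (by simp)
      · have : val m (epsOf m S) ⟨2 * m - x, hlt⟩ = x := by
          rw [he]; simp; omega
        rw [← this]
        exact Finset.mem_image_of_mem _ (Finset.mem_univ _)

/-- rank of a value among the chosen values -/
def rkF (m : ℕ) (ε : Fin m → Bool) (v : ℕ) : ℕ := ((Vs m ε).filter (· < v)).card

lemma rkF_mono (m : ℕ) (ε : Fin m → Bool) {u v : ℕ} (h : u ≤ v) :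
    rkF m ε u ≤ rkF m ε v := by
  apply Finset.card_le_card
  intro a ha
  simp only [Finset.mem_filter] at ha ⊢
  exact ⟨ha.1, by omega⟩

lemma rkF_w (m : ℕ) (ε : Fin m → Bool) {x : ℕ} (hx : x < m) :
    rkF m ε (w m ε x) = x := by
  have himg : (Vs m ε).filter (· < w m ε x) = (Finset.range x).image (w m ε) := by
    ext v
    simp only [Finset.mem_filter, Finset.mem_image, Finset.mem_range]
    constructor
    · rintro ⟨hv, hlt⟩
      rcases w_surj m ε hv with ⟨y, hy, rfl⟩
      refine ⟨y, ?_, rfl⟩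
      by_contra hcon
      push_neg at hcon
      exact absurd hlt (not_lt.2 (w_mono m ε hcon hy))
    · rintro ⟨y, hy, rfl⟩
      exact ⟨w_mem m ε (by omega), w_strictmono m ε hy hx⟩
  rw [rkF, himg, Finset.card_image_of_injOn, Finset.card_range]
  intro a ha b hb hab
  have ha' := Finset.mem_range.1 ha
  have hb' := Finset.mem_range.1 hb
  exact w_inj m ε (by omega) (by omega) hab

lemma rkF_spec (m : ℕ) (ε : Fin m → Bool) {v : ℕ} (hv : v ∈ Vs m ε) :
    rkF m ε v < m ∧ w m ε (rkF m ε v) = v := by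
  rcases w_surj m ε hv with ⟨x, hx, rfl⟩
  rw [rkF_w m ε hx]
  exact ⟨hx, rfl⟩

/-- staircase profile of a set -/
def iprofF (m : ℕ) (ε : Fin m → Bool) (S : Finset (ℕ × ℕ)) (t : ℕ) : ℕ :=
  S.sup (fun p => rkF m ε p.1 - (t - (rkF m ε p.2 - rkF m ε p.1)))


section Profile

variable {m : ℕ} {ε : Fin m → Bool} {S : Finset (ℕ × ℕ)}

lemma iprof_anti (hco : ∀ p ∈ S, p.1 ∈ Vs m ε ∧ p.2 ∈ Vs m ε) {t u : ℕ} (h : t ≤ u) :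
    iprofF m ε S u ≤ iprofF m ε S t := by
  apply Finset.sup_le
  intro p hp
  calc rkF m ε p.1 - (u - (rkF m ε p.2 - rkF m ε p.1))
      ≤ rkF m ε p.1 - (t - (rkF m ε p.2 - rkF m ε p.1)) := by omega
    _ ≤ iprofF m ε S t :=
      Finset.le_sup (f := fun p => rkF m ε p.1 - (t - (rkF m ε p.2 - rkF m ε p.1))) hp

lemma iprof_lip (t : ℕ) : iprofF m ε S t ≤ iprofF m ε S (t + 1) + 1 := by
  apply Finset.sup_le
  intro p hp
  have h1 : rkF m ε p.1 - ((t+1) - (rkF m ε p.2 - rkF m ε p.1)) ≤ iprofF m ε S (t+1) :=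
    Finset.le_sup (f := fun p => rkF m ε p.1 - ((t+1) - (rkF m ε p.2 - rkF m ε p.1))) hp
  omega

lemma iprof_last (hco : ∀ p ∈ S, p.1 ∈ Vs m ε ∧ p.2 ∈ Vs m ε)
    (hT : ∀ p ∈ S, p.1 ≤ p.2) : iprofF m ε S (m - 1) = 0 := by
  apply Nat.le_antisymm _ (Nat.zero_le _)
  apply Finset.sup_le
  intro p hp
  have h1 := (rkF_spec m ε (hco p hp).1).1
  have h2 := (rkF_spec m ε (hco p hp).2).1
  have h3 := rkF_mono m ε (hT p hp)
  omega

lemma iprof_le (hco : ∀ p ∈ S, p.1 ∈ Vs m ε ∧ p.2 ∈ Vs m ε) (t : ℕ) :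
    iprofF m ε S t ≤ m - 1 := by
  apply Finset.sup_le
  intro p hp
  have h1 := (rkF_spec m ε (hco p hp).1).1
  omega

lemma iprof_val (hadm : SymAdmissible (2 * m) S)
    (hco : ∀ p ∈ S, p.1 ∈ Vs m ε ∧ p.2 ∈ Vs m ε)
    (hT : ∀ p ∈ S, p.1 ≤ p.2) {p : ℕ × ℕ} (hp : p ∈ S) :
    iprofF m ε S (rkF m ε p.2 - rkF m ε p.1) = rkF m ε p.1 := by
  apply Nat.le_antisymm
  · apply Finset.sup_le
    intro q hq
    have hchain := chain_of_adm hadm hp hq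
    have hq12 := rkF_mono m ε (hT q hq)
    have hp12 := rkF_mono m ε (hT p hp)
    rcases hchain with ⟨h1, h2⟩ | ⟨h1, h2⟩
    · have r1 := rkF_mono m ε h1
      have r2 := rkF_mono m ε h2
      omega
    · have r1 := rkF_mono m ε h1
      have r2 := rkF_mono m ε h2
      omega
  · have : rkF m ε p.1 - ((rkF m ε p.2 - rkF m ε p.1) - (rkF m ε p.2 - rkF m ε p.1))
        ≤ iprofF m ε S (rkF m ε p.2 - rkF m ε p.1) :=
      Finset.le_sup (f := fun q => rkF m ε q.1 -
        ((rkF m ε p.2 - rkF m ε p.1) - (rkF m ε q.2 - rkF m ε q.1))) hp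
    omega

end Profile

/-- the move sequence determined by a profile function -/
def dProf (m : ℕ) (g : ℕ → ℕ) : Fin (m - 1) → Bool :=
  fun s => decide (g ((s : ℕ) + 1) < g (s : ℕ))

lemma Lc_of_prof (m : ℕ) (g : ℕ → ℕ) (hg1 : ∀ t u : ℕ, t ≤ u → g u ≤ g t)
    (hg2 : ∀ t, g t ≤ g (t + 1) + 1) :
    ∀ t, t ≤ m - 1 → Lc (dext m (dProf m g)) t = g 0 - g t := by
  intro t
  induction t with
  | zero => intro _; rw [Lc_zero]; omega
  | succ u ih =>
    intro h
    have hu := ih (by omega)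
    rw [Lc_succ]
    have hul : u < m - 1 := by omega
    have hdx : dext m (dProf m g) u = decide (g (u + 1) < g u) := by
      rw [dext, dif_pos hul]; rfl
    rw [hdx, hu]
    have h1 := hg1 0 u (by omega)
    have h2 := hg1 u (u + 1) (by omega)
    have h3 := hg2 u
    by_cases hc : g (u + 1) < g u
    · rw [decide_eq_true hc]; simp; omega
    · rw [decide_eq_false hc]; simp; omega

lemma ip_of_prof (m : ℕ) (g : ℕ → ℕ) (hg1 : ∀ t u : ℕ, t ≤ u → g u ≤ g t)
    (hg2 : ∀ t, g t ≤ g (t + 1) + 1) (hg3 : g (m - 1) = 0) :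
    ∀ t, t ≤ m - 1 → ip (dext m (dProf m g)) m t = g t := by
  intro t ht
  have h1 := Lc_of_prof m g hg1 hg2 t ht
  have h2 := Lc_of_prof m g hg1 hg2 (m - 1) (le_refl _)
  have h3 := hg1 0 t (by omega)
  rw [ip, h1, h2, hg3]
  omega

/-- Surjectivity: every maximal admissible set is of the form `F m ε d`. -/
lemma exists_param {m : ℕ} {S : Finset (ℕ × ℕ)} (hm : 1 ≤ m)
    (hS : MaxSymAdmissible (2 * m) S) :
    ∃ ε d, S = F m ε d := by
  set ε := epsOf m S with hε
  have hVeq : Vs m ε = VSet S := VSet_eq_Vs hm hS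
  have hco : ∀ p ∈ S, p.1 ∈ Vs m ε ∧ p.2 ∈ Vs m ε := by
    intro p hp
    rw [hVeq]
    exact ⟨mem_VSet_fst hp, mem_VSet_snd hp⟩
  have hT : ∀ p ∈ S, p.1 ≤ p.2 := by
    intro p hp; exact (hS.1.1 p hp).2.1
  set g := iprofF m ε S with hg
  have hg1 : ∀ t u : ℕ, t ≤ u → g u ≤ g t := fun t u h => iprof_anti hco h
  have hg2 : ∀ t, g t ≤ g (t + 1) + 1 := fun t => iprof_lip t
  have hg3 : g (m - 1) = 0 := iprof_last hco hT
  set d := dProf m g with hd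
  -- S is contained in the facet F m ε d
  have hsub : S ⊆ F m ε d := by
    intro p hp
    obtain ⟨h1m, h1w⟩ := rkF_spec m ε (hco p hp).1
    obtain ⟨h2m, h2w⟩ := rkF_spec m ε (hco p hp).2
    have h12 := rkF_mono m ε (hT p hp)
    set δ := rkF m ε p.2 - rkF m ε p.1 with hδ
    have hδm : δ ≤ m - 1 := by omega
    have hipδ : ip (dext m d) m δ = rkF m ε p.1 := by
      rw [hd]
      rw [ip_of_prof m g hg1 hg2 hg3 δ hδm]
      rw [hg]
      exact iprof_val hS.1 hco hT hp
    apply Finset.mem_image.2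
    refine ⟨δ, Finset.mem_range.2 (by omega), ?_⟩
    rw [cell, hipδ]
    have : rkF m ε p.1 + δ = rkF m ε p.2 := by omega
    rw [this, h1w, h2w]
  exact ⟨ε, d, hS.2 (F m ε d) (F_admissible m ε d) hsub⟩

end SymFacets


/-- For `n = 2m`, every maximal admissible subset of `T°_n` has exactly `m`
elements, and the number of maximal admissible subsets of `T°_n` is
`2^(n-1)`. -/
theorem card_maxSymAdmissible (m n : ℕ) (hm : 1 ≤ m) (hn : n = 2 * m) :
    (∀ S, MaxSymAdmissible n S → S.card = m) ∧
    {S : Finset (ℕ × ℕ) | MaxSymAdmissible n S}.ncard = 2 ^ (n - 1) := by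
  subst hn
  constructor
  · intro S hS
    obtain ⟨ε, d, rfl⟩ := SymFacets.exists_param hm hS
    exact SymFacets.F_card m ε d
  · have hset : {S : Finset (ℕ × ℕ) | MaxSymAdmissible (2 * m) S} =
        ↑((Finset.univ : Finset ((Fin m → Bool) × (Fin (m - 1) → Bool))).image
          (fun p => SymFacets.F m p.1 p.2)) := by
      ext S
      simp only [Set.mem_setOf_eq, Finset.coe_image, Set.mem_image, Finset.mem_coe,
        Finset.coe_univ, Set.image_univ, Set.mem_range]
      constructor
      · intro hS
        obtain ⟨ε, d, rfl⟩ := SymFacets.exists_param hm hS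
        exact ⟨(ε, d), rfl⟩
      · rintro ⟨⟨ε, d⟩, rfl⟩
        exact SymFacets.F_max m ε d hm
    rw [hset, Set.ncard_coe_finset,
      Finset.card_image_of_injective _ (SymFacets.F_inj m hm), Finset.card_univ]
    simp only [Fintype.card_prod, Fintype.card_fun, Fintype.card_bool, Fintype.card_fin]
    rw [← pow_add]
    congr 1
    omega
end

section
/- For every integer m ≥ 1, every maximal diagonal-free subset of the triangle T_m = {(i,j) : 1 ≤ i ≤ j ≤ m} has exactly m elements, and the number of maximal diagonal-free subsets of T_m equals 2^{m−1}. -/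
/-- A set of pairs is diagonal-free if it contains no two elements
`(i,j)`, `(h,k)` with `i < h` and `j < k`. -/
def DiagFree (S : Finset (ℕ × ℕ)) : Prop :=
  ∀ p ∈ S, ∀ q ∈ S, p.1 < q.1 → p.2 < q.2 → False

/-- `S` is a maximal diagonal-free subset of `G`. -/
def MaxDiagFreeIn (G S : Finset (ℕ × ℕ)) : Prop :=
  S ⊆ G ∧ DiagFree S ∧ ∀ T ⊆ G, DiagFree T → S ⊆ T → S = T

/-- The triangle `T_m = {(i,j) : 1 ≤ i ≤ j ≤ m}`. -/
def triangle (m : ℕ) : Finset (ℕ × ℕ) :=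
  (Finset.Icc 1 m ×ˢ Finset.Icc 1 m).filter (fun p => p.1 ≤ p.2)

namespace DFaux

def lvl (m : ℕ) (p : ℕ × ℕ) : ℕ := (p.1 - 1) + (m - p.2)

lemma mem_triangle {m : ℕ} {p : ℕ × ℕ} :
    p ∈ triangle m ↔ 1 ≤ p.1 ∧ p.1 ≤ p.2 ∧ p.2 ≤ m := by
  simp only [triangle, Finset.mem_filter, Finset.mem_product, Finset.mem_Icc]
  omega

lemma lvl_lt {m : ℕ} {p : ℕ × ℕ} (hp : p ∈ triangle m) : lvl m p < m := by
  rw [mem_triangle] at hp; unfold lvl; omega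

/-- Two distinct triangle points of the same level conflict. -/
lemma conflict_same_lvl {m : ℕ} {p q : ℕ × ℕ} (hp : p ∈ triangle m) (hq : q ∈ triangle m)
    (hne : p ≠ q) (hl : lvl m p = lvl m q) :
    (p.1 < q.1 ∧ p.2 < q.2) ∨ (q.1 < p.1 ∧ q.2 < p.2) := by
  rw [mem_triangle] at hp hq
  unfold lvl at hl
  have : p.1 ≠ q.1 ∨ p.2 ≠ q.2 := by
    by_contra h; push_neg at h; exact hne (Prod.ext h.1 h.2)
  omega

/-- Two elements of a diag-free set with the same level are equal. -/
lemma eq_of_lvl_eq {m : ℕ} {S : Finset (ℕ × ℕ)} (hS : S ⊆ triangle m) (hdf : DiagFree S)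
    {p q : ℕ × ℕ} (hp : p ∈ S) (hq : q ∈ S) (hl : lvl m p = lvl m q) : p = q := by
  by_contra hne
  rcases conflict_same_lvl (hS hp) (hS hq) hne hl with ⟨h1, h2⟩ | ⟨h1, h2⟩
  · exact hdf p hp q hq h1 h2
  · exact hdf q hq p hp h1 h2

lemma df_le1 {m : ℕ} {S : Finset (ℕ × ℕ)} (hS : S ⊆ triangle m) (hdf : DiagFree S)
    {p q : ℕ × ℕ} (hp : p ∈ S) (hq : q ∈ S) (hl : lvl m p < lvl m q) : p.1 ≤ q.1 := by
  by_contra h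
  push_neg at h
  have h2 : ¬ (q.2 < p.2) := fun hh => hdf q hq p hp h hh
  have b1 := mem_triangle.1 (hS hp); have b2 := mem_triangle.1 (hS hq)
  unfold lvl at hl; omega

lemma df_le2 {m : ℕ} {S : Finset (ℕ × ℕ)} (hS : S ⊆ triangle m) (hdf : DiagFree S)
    {p q : ℕ × ℕ} (hp : p ∈ S) (hq : q ∈ S) (hl : lvl m p < lvl m q) : q.2 ≤ p.2 := by
  by_contra h
  push_neg at h
  have h2 : ¬ (p.1 < q.1) := fun hh => hdf p hp q hq hh h
  have b1 := mem_triangle.1 (hS hp); have b2 := mem_triangle.1 (hS hq)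
  unfold lvl at hl; omega


/-- Extension lemma: a diag-free set missing level `t` can be properly extended. -/
lemma extension {m t : ℕ} {S : Finset (ℕ × ℕ)} (hS : S ⊆ triangle m) (hdf : DiagFree S)
    (ht : t < m) (hmiss : ∀ s ∈ S, lvl m s ≠ t) :
    ∃ q ∈ triangle m, q ∉ S ∧ DiagFree (insert q S) := by
  classical
  set f : ℕ × ℕ → ℕ := fun s => if lvl m s < t then s.1 else s.2 + t + 1 - m with hf
  set a : ℕ := max 1 (S.sup f) with ha
  set b : ℕ := a + (m - 1 - t) with hb
  -- basic bounds on f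
  have hfle : ∀ s ∈ S, f s ≤ t + 1 := by
    intro s hs
    have hb1 := mem_triangle.1 (hS hs)
    simp only [hf]
    split
    · unfold lvl at *; omega
    · omega
  have hale : a ≤ t + 1 := by
    rw [ha]
    exact max_le (by omega) (Finset.sup_le hfle)
  have ha1 : 1 ≤ a := le_max_left _ _
  have hblem : b ≤ m := by omega
  have hq : (a, b) ∈ triangle m := mem_triangle.2 ⟨ha1, by omega, hblem⟩
  have hlvlq : lvl m (a, b) = t := by unfold lvl; simp only; omega
  have hqS : (a, b) ∉ S := fun hh => hmiss _ hh hlvlq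
  refine ⟨(a, b), hq, hqS, ?_⟩
  -- the lower bound property of a
  have hage : ∀ s ∈ S, f s ≤ a := fun s hs => le_trans (Finset.le_sup hs) (le_max_right _ _)
  -- no conflict (q, s) : a < s.1 ∧ b < s.2 impossible
  have noc1 : ∀ s ∈ S, a < s.1 → b < s.2 → False := by
    intro s hs h1 h2
    have hb1 := mem_triangle.1 (hS hs)
    have := hage s hs
    have hm := hmiss s hs
    simp only [hf] at this
    split at this
    · omega
    · unfold lvl at *; omega
  -- no conflict (s, q) : s.1 < a ∧ s.2 < b impossible
  have noc2 : ∀ s ∈ S, s.1 < a → s.2 < b → False := by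
    intro s hs h1 h2
    have hb1 := mem_triangle.1 (hS hs)
    -- a > s.1 ≥ 1 so a > 1, hence sup f = a is attained
    have hsup : S.sup f = a := by
      have : S.sup f ≤ a := le_max_right _ _
      rcases (max_choice 1 (S.sup f)) with h | h
      · omega
      · omega
    have hne : S.Nonempty := by
      by_contra hemp
      rw [Finset.not_nonempty_iff_eq_empty] at hemp
      subst hemp
      simp at hsup
      omega
    obtain ⟨s', hs', hfs'⟩ := Finset.exists_mem_eq_sup S hne f
    rw [hsup] at hfs'
    have hb2 := mem_triangle.1 (hS hs')
    have hm := hmiss s hs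
    have hm' := hmiss s' hs'
    simp only [hf] at hfs'
    split at hfs'
    · -- a = s'.1, s' at lower level
      rename_i hlow
      -- if s = s' then s.1 < a = s.1 contradiction
      by_cases hss : s = s'
      · subst hss; omega
      · -- s.1 < s'.1, so by diag-freeness s.2 ≥ s'.2
        have : ¬ (s.2 < s'.2) := fun hh => hdf s hs s' hs' (by omega) hh
        have l1 : lvl m s = s.1 - 1 + (m - s.2) := rfl
        have l2 : lvl m s' = s'.1 - 1 + (m - s'.2) := rfl
        omega
    · -- a = s'.2 + t + 1 - m, s' at higher level
      rename_i hhigh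
      push_neg at hhigh
      -- s cases: lower or higher level
      by_cases hsl : lvl m s < t
      · -- s lower, s' higher : lvl s < lvl s' so s.2 ≥ s'.2
        have h3 : ¬ (s.1 < s'.1 ∧ s.2 < s'.2) := by
          intro ⟨u, v⟩; exact hdf s hs s' hs' u v
        have h4 : ¬ (s'.1 < s.1 ∧ s'.2 < s.2) := by
          intro ⟨u, v⟩; exact hdf s' hs' s hs u v
        have l1 : lvl m s = s.1 - 1 + (m - s.2) := rfl
        have l2 : lvl m s' = s'.1 - 1 + (m - s'.2) := rfl
        omega
      · -- s higher too
        have h3 : ¬ (s.1 < s'.1 ∧ s.2 < s'.2) := by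
          intro ⟨u, v⟩; exact hdf s hs s' hs' u v
        have h4 : ¬ (s'.1 < s.1 ∧ s'.2 < s.2) := by
          intro ⟨u, v⟩; exact hdf s' hs' s hs u v
        have l1 : lvl m s = s.1 - 1 + (m - s.2) := rfl
        have l2 : lvl m s' = s'.1 - 1 + (m - s'.2) := rfl
        omega
  -- assemble
  intro p hp q hq h1 h2
  rw [Finset.mem_insert] at hp hq
  rcases hp with rfl | hp <;> rcases hq with rfl | hq
  · omega
  · exact noc1 q hq h1 h2
  · exact noc2 p hp h1 h2
  · exact hdf p hp q hq h1 h2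

/-- number of "right" moves among the first `t` steps -/
def rD (D : Finset ℕ) (t : ℕ) : ℕ := (D ∩ Finset.range t).card

/-- the point at level `t` of the path determined by `D` -/
def pt (m : ℕ) (D : Finset ℕ) (t : ℕ) : ℕ × ℕ := (1 + rD D t, m - (t - rD D t))

def pathOf (m : ℕ) (D : Finset ℕ) : Finset (ℕ × ℕ) := (Finset.range m).image (pt m D)

lemma rD_le (D : Finset ℕ) (t : ℕ) : rD D t ≤ t :=
  le_trans (Finset.card_le_card (Finset.inter_subset_right)) (by simp)

lemma rD_mono (D : Finset ℕ) {t s : ℕ} (h : t ≤ s) : rD D t ≤ rD D s :=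
  Finset.card_le_card (Finset.inter_subset_inter le_rfl (Finset.range_subset_range.2 h))

lemma rD_sub_mono (D : Finset ℕ) {t s : ℕ} (h : t ≤ s) : t - rD D t ≤ s - rD D s := by
  have h1 : rD D s ≤ rD D t + (s - t) := by
    have : D ∩ Finset.range s ⊆ (D ∩ Finset.range t) ∪ (Finset.Ico t s) := by
      intro x hx
      simp only [Finset.mem_inter, Finset.mem_range, Finset.mem_union, Finset.mem_Ico] at *
      obtain ⟨hxD, hxs⟩ := hx
      by_cases hxt : x < t
      · exact Or.inl ⟨hxD, hxt⟩
      · exact Or.inr ⟨by omega, hxs⟩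
    calc rD D s ≤ ((D ∩ Finset.range t) ∪ (Finset.Ico t s)).card := Finset.card_le_card this
      _ ≤ rD D t + (Finset.Ico t s).card := Finset.card_union_le _ _
      _ = rD D t + (s - t) := by rw [Nat.card_Ico]
  have := rD_le D t
  omega

lemma rD_succ (D : Finset ℕ) (t : ℕ) :
    rD D (t + 1) = rD D t + (if t ∈ D then 1 else 0) := by
  unfold rD
  rw [Finset.range_add_one]
  by_cases h : t ∈ D
  · rw [if_pos h]
    have he : D ∩ insert t (Finset.range t) = insert t (D ∩ Finset.range t) := by
      ext x
      simp only [Finset.mem_inter, Finset.mem_insert, Finset.mem_range]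
      constructor
      · rintro ⟨hd, rfl | hlt⟩
        · exact Or.inl rfl
        · exact Or.inr ⟨hd, hlt⟩
      · rintro (rfl | ⟨hd, hlt⟩)
        · exact ⟨h, Or.inl rfl⟩
        · exact ⟨hd, Or.inr hlt⟩
    rw [he, Finset.card_insert_of_notMem (by simp)]
  · rw [if_neg h]
    have he : D ∩ insert t (Finset.range t) = D ∩ Finset.range t := by
      ext x
      simp only [Finset.mem_inter, Finset.mem_insert, Finset.mem_range]
      constructor
      · rintro ⟨hd, rfl | hlt⟩
        · exact absurd hd h
        · exact ⟨hd, hlt⟩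
      · rintro ⟨hd, hlt⟩
        exact ⟨hd, Or.inr hlt⟩
    rw [he]
    omega

lemma pt_mem (m : ℕ) (D : Finset ℕ) {t : ℕ} (ht : t < m) : pt m D t ∈ triangle m := by
  have h1 := rD_le D t
  rw [mem_triangle]; unfold pt; simp only; omega

lemma lvl_pt (m : ℕ) (D : Finset ℕ) {t : ℕ} (ht : t < m) : lvl m (pt m D t) = t := by
  have h1 := rD_le D t
  unfold lvl pt; simp only; omega

lemma pt1_mono (m : ℕ) (D : Finset ℕ) {t s : ℕ} (h : t ≤ s) : (pt m D t).1 ≤ (pt m D s).1 := by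
  have := rD_mono D h; unfold pt; simp only; omega

lemma pt2_anti (m : ℕ) (D : Finset ℕ) {t s : ℕ} (h : t ≤ s) : (pt m D s).2 ≤ (pt m D t).2 := by
  have := rD_sub_mono D h; unfold pt; simp only; omega

lemma df_pathOf (m : ℕ) (D : Finset ℕ) : DiagFree (pathOf m D) := by
  intro p hp q hq h1 h2
  simp only [pathOf, Finset.mem_image, Finset.mem_range] at hp hq
  obtain ⟨t, ht, rfl⟩ := hp
  obtain ⟨s, hs, rfl⟩ := hq
  rcases le_or_gt t s with h | h
  · exact absurd (pt2_anti m D h) (by omega)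
  · exact absurd (pt1_mono m D h.le) (by omega)

lemma pathOf_subset (m : ℕ) (D : Finset ℕ) : pathOf m D ⊆ triangle m := by
  intro p hp
  simp only [pathOf, Finset.mem_image, Finset.mem_range] at hp
  obtain ⟨t, ht, rfl⟩ := hp
  exact pt_mem m D ht


/-- paths are maximal -/
lemma max_pathOf (m : ℕ) (D : Finset ℕ) : MaxDiagFreeIn (triangle m) (pathOf m D) := by
  refine ⟨pathOf_subset m D, df_pathOf m D, ?_⟩
  intro T hT hdfT hsub
  refine Finset.Subset.antisymm hsub ?_
  intro x hx
  by_contra hxS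
  have hxt := hT hx
  have hlt := lvl_lt hxt
  have hpt : pt m D (lvl m x) ∈ pathOf m D := by
    simp only [pathOf, Finset.mem_image, Finset.mem_range]
    exact ⟨lvl m x, hlt, rfl⟩
  have hne : x ≠ pt m D (lvl m x) := fun h => hxS (h ▸ hpt)
  have hl : lvl m x = lvl m (pt m D (lvl m x)) := (lvl_pt m D hlt).symm
  rcases conflict_same_lvl hxt (pt_mem m D hlt) hne hl with ⟨h1, h2⟩ | ⟨h1, h2⟩
  · exact hdfT x hx _ (hsub hpt) h1 h2
  · exact hdfT _ (hsub hpt) x hx h1 h2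

/-- in a maximal set every level is hit -/
lemma max_surj {m : ℕ} {S : Finset (ℕ × ℕ)} (h : MaxDiagFreeIn (triangle m) S)
    {t : ℕ} (ht : t < m) : ∃ p ∈ S, lvl m p = t := by
  obtain ⟨hS, hdf, hmax⟩ := h
  by_contra hmiss
  push_neg at hmiss
  obtain ⟨q, hq, hqS, hdf'⟩ := extension hS hdf ht hmiss
  have hsub : S ⊆ insert q S := Finset.subset_insert q S
  have hins : insert q S ⊆ triangle m := by
    intro x hx
    rcases Finset.mem_insert.1 hx with rfl | hx
    · exact hq
    · exact hS hx
  have := hmax (insert q S) hins hdf' hsub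
  exact hqS (this ▸ Finset.mem_insert_self q S)

lemma max_card {m : ℕ} {S : Finset (ℕ × ℕ)} (h : MaxDiagFreeIn (triangle m) S) :
    S.card = m := by
  classical
  have hS := h.1
  have hdf := h.2.1
  have himg : S.image (lvl m) = Finset.range m := by
    apply Finset.Subset.antisymm
    · intro t htt
      simp only [Finset.mem_image] at htt
      obtain ⟨p, hp, rfl⟩ := htt
      exact Finset.mem_range.2 (lvl_lt (hS hp))
    · intro t htt
      obtain ⟨p, hp, hl⟩ := max_surj h (Finset.mem_range.1 htt)
      exact Finset.mem_image.2 ⟨p, hp, hl⟩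
  have hinj : Set.InjOn (lvl m) ↑S := fun p hp q hq hl =>
    eq_of_lvl_eq hS hdf hp hq hl
  rw [← Finset.card_range m, ← himg, Finset.card_image_of_injOn hinj]

/-- every maximal set is a path -/
lemma max_eq_pathOf {m : ℕ} {S : Finset (ℕ × ℕ)} (h : MaxDiagFreeIn (triangle m) S) :
    ∃ D ∈ (Finset.range (m-1)).powerset, S = pathOf m D := by
  classical
  have hS := h.1
  have hdf := h.2.1
  set D : Finset ℕ := (Finset.range (m-1)).filter
    (fun t => ∃ p ∈ S, ∃ q ∈ S, lvl m p = t ∧ lvl m q = t+1 ∧ q.1 = p.1+1) with hD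
  refine ⟨D, Finset.mem_powerset.2 (Finset.filter_subset _ _), ?_⟩
  have key : ∀ t, t < m → ∀ p ∈ S, lvl m p = t → p = pt m D t := by
    intro t
    induction t with
    | zero =>
      intro ht p hp hl
      have hb := mem_triangle.1 (hS hp)
      have l1 : lvl m p = p.1 - 1 + (m - p.2) := rfl
      have hr : rD D 0 = 0 := by simp [rD]
      have : pt m D 0 = (1, m) := by unfold pt; rw [hr]; simp
      rw [this]
      exact Prod.ext (by omega) (by omega)
    | succ t ih =>
      intro ht p hp hl
      obtain ⟨p', hp', hl'⟩ := max_surj h (show t < m by omega)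
      have hpt' := ih (by omega) p' hp' hl'
      have hb := mem_triangle.1 (hS hp)
      have hb' := mem_triangle.1 (hS hp')
      have hle1 : p'.1 ≤ p.1 := df_le1 hS hdf hp' hp (by omega)
      have hle2 : p.2 ≤ p'.2 := df_le2 hS hdf hp' hp (by omega)
      have l1 : lvl m p = p.1 - 1 + (m - p.2) := rfl
      have l2 : lvl m p' = p'.1 - 1 + (m - p'.2) := rfl
      have hup : p.1 ≤ p'.1 + 1 := by omega
      have htD : t ∈ D ↔ p.1 = p'.1 + 1 := by
        rw [hD, Finset.mem_filter, Finset.mem_range]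
        constructor
        · rintro ⟨_, p₀, hp₀, q₀, hq₀, hlp₀, hlq₀, he⟩
          have e1 : p₀ = p' := eq_of_lvl_eq hS hdf hp₀ hp' (by omega)
          have e2 : q₀ = p := eq_of_lvl_eq hS hdf hq₀ hp (by omega)
          rw [e1, e2] at he
          exact he
        · intro he
          exact ⟨by omega, p', hp', p, hp, hl', hl, he⟩
      have hr1 : p'.1 = 1 + rD D t := by rw [hpt']; rfl
      have hfst : p.1 = 1 + rD D (t+1) := by
        rw [rD_succ]
        by_cases hmem : t ∈ D
        · rw [if_pos hmem]
          have he := htD.1 hmem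
          omega
        · rw [if_neg hmem]
          have hne : p.1 ≠ p'.1 + 1 := fun he => hmem (htD.2 he)
          omega
      have hrle := rD_le D (t+1)
      refine Prod.ext hfst ?_
      show p.2 = m - (t + 1 - rD D (t+1))
      omega
  apply Finset.Subset.antisymm
  · intro x hx
    have hlt := lvl_lt (hS hx)
    have := key (lvl m x) hlt x hx rfl
    simp only [pathOf, Finset.mem_image, Finset.mem_range]
    exact ⟨lvl m x, hlt, this.symm⟩
  · intro x hx
    simp only [pathOf, Finset.mem_image, Finset.mem_range] at hx
    obtain ⟨t, ht, rfl⟩ := hx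
    obtain ⟨p, hp, hl⟩ := max_surj h ht
    have := key t ht p hp hl
    rwa [← this]

/-- injectivity of pathOf -/
lemma pathOf_injOn (m : ℕ) (hm : 1 ≤ m) :
    Set.InjOn (pathOf m) ↑((Finset.range (m-1)).powerset) := by
  intro D₁ hD₁ D₂ hD₂ heq
  simp only [Finset.coe_powerset, Set.mem_preimage, Set.mem_powerset_iff,
    Finset.coe_range] at hD₁ hD₂
  have hpt : ∀ t, t < m → pt m D₁ t = pt m D₂ t := by
    intro t ht
    have h1 : pt m D₁ t ∈ pathOf m D₂ := by
      rw [← heq]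
      simp only [pathOf, Finset.mem_image, Finset.mem_range]
      exact ⟨t, ht, rfl⟩
    simp only [pathOf, Finset.mem_image, Finset.mem_range] at h1
    obtain ⟨s, hs, hseq⟩ := h1
    have : s = t := by
      have := lvl_pt m D₂ hs
      rw [hseq, lvl_pt m D₁ ht] at this
      omega
    rw [← hseq, this]
  have hr : ∀ t, t < m → rD D₁ t = rD D₂ t := by
    intro t ht
    have := congrArg Prod.fst (hpt t ht)
    simpa [pt] using this
  ext t
  by_cases ht : t < m - 1
  · have h1 := hr t (by omega)
    have h2 := hr (t+1) (by omega)
    have s1 := rD_succ D₁ t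
    have s2 := rD_succ D₂ t
    constructor
    · intro hmem
      by_contra hmem2
      rw [if_pos hmem] at s1
      rw [if_neg hmem2] at s2
      omega
    · intro hmem
      by_contra hmem2
      rw [if_neg hmem2] at s1
      rw [if_pos hmem] at s2
      omega
  · constructor
    · intro hmem
      exact absurd (hD₁ hmem) ht
    · intro hmem
      exact absurd (hD₂ hmem) ht


end DFaux

/-- Every maximal diagonal-free subset of the triangle `T_m` has exactly `m`
elements, and the number of maximal diagonal-free subsets of `T_m` equals
`2^(m-1)`. -/
theorem card_maxDiagFree_triangle (m : ℕ) (hm : 1 ≤ m) :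
    (∀ S, MaxDiagFreeIn (triangle m) S → S.card = m) ∧
    {S : Finset (ℕ × ℕ) | MaxDiagFreeIn (triangle m) S}.ncard = 2 ^ (m - 1) := by
  classical
  refine ⟨fun S hS => DFaux.max_card hS, ?_⟩
  have hset : {S : Finset (ℕ × ℕ) | MaxDiagFreeIn (triangle m) S}
      = ↑(((Finset.range (m-1)).powerset).image (DFaux.pathOf m)) := by
    ext S
    simp only [Set.mem_setOf_eq, Finset.coe_image, Set.mem_image, Finset.mem_coe]
    constructor
    · intro h
      obtain ⟨D, hD, rfl⟩ := DFaux.max_eq_pathOf h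
      exact ⟨D, hD, rfl⟩
    · rintro ⟨D, hD, rfl⟩
      exact DFaux.max_pathOf m D
  rw [hset, Set.ncard_coe_finset,
    Finset.card_image_of_injOn (DFaux.pathOf_injOn m hm),
    Finset.card_powerset, Finset.card_range]
end

section
/- Let K be a field and n ≥ 2 an integer. Let S ⊆ {1,…,n} × {1,…,n} be a set of positions such that every row index occurs in exactly two elements of S, every column index occurs in exactly two elements of S, and the graph G with vertex set S, in which two distinct positions are adjacent if and only if they have the same row index or the same column index, is connected (so G is a cycle of length 2n). Let Y be the n × n matrix over the polynomial ring K[x_p : p ∈ S] whose (i,j) entry is x_{(i,j)} if (i,j) ∈ S and 0 otherwise. Then for every integer k with 1 ≤ k < n, the ideal of k-minors of Y equals the ideal generated by the monomials ∏_{p ∈ A} x_p, where A ranges over the k-element subsets of S whose elements have pairwise distinct row indices and pairwise distinct column indices. -/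
/-!
Expanding a `k`-minor, each nonzero term is the monomial of `k` non-attacking rooks placed on
cells of `S`. Conversely, take the minor on the rows `r i` and columns `c i` of such a placement.
If a permutation `σ ≠ 1` contributed, all cells `(r (σ i), c i)` would lie in `S`; as every
row and column meets `S` only twice, the cells of `S` in the rows `r i` moved by `σ` would then
be closed under the rook adjacency, hence by connectivity be all of `S`. But `k < n` leaves a
row of `S` untouched, so the minor is exactly the monomial of the placement.
-/

open MvPolynomial Finset

theorem Finset.eq_or_eq_of_card_le_two {α : Type*} {s : Finset α} (hs : #s ≤ 2) {a b x : α}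
    (ha : a ∈ s) (hb : b ∈ s) (hab : a ≠ b) (hx : x ∈ s) : x = a ∨ x = b := by
  by_contra! h
  exact hs.not_gt (two_lt_card.2 ⟨a, ha, b, hb, x, hx, hab, h.1.symm, h.2.symm⟩)

section RookPlacements

variable {ι κ : Type*}

def rookGraph (S : Finset (ι × κ)) : SimpleGraph S :=
  SimpleGraph.fromRel fun p q => p.1.1 = q.1.1 ∨ p.1.2 = q.1.2

section Cycle

variable {S : Finset (ι × κ)} {k : ℕ} {r : Fin k → ι} {c : Fin k → κ} {σ : Equiv.Perm (Fin k)}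

theorem eq_or_eq_of_mem_of_snd_eq [DecidableEq κ]
    (hcol : ∀ j, #(S.filter fun p => p.2 = j) ≤ 2) (hr : Function.Injective r)
    (hdiag : ∀ i, (r i, c i) ∈ S) (hσ : ∀ i, (r (σ i), c i) ∈ S)
    {i : Fin k} (hi : σ i ≠ i) {x : ι × κ} (hx : x ∈ S) (hxc : x.2 = c i) :
    x.1 = r i ∨ x.1 = r (σ i) := by
  have hne : (r i, c i) ≠ (r (σ i), c i) := fun h => hi (hr (Prod.ext_iff.1 h).1).symm
  rcases eq_or_eq_of_card_le_two (hcol (c i)) (mem_filter.2 ⟨hdiag i, rfl⟩)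
    (mem_filter.2 ⟨hσ i, rfl⟩) hne (mem_filter.2 ⟨hx, hxc⟩) with rfl | rfl
  exacts [Or.inl rfl, Or.inr rfl]

theorem eq_or_eq_of_mem_of_fst_eq [DecidableEq ι]
    (hrow : ∀ i, #(S.filter fun p => p.1 = i) ≤ 2) (hc : Function.Injective c)
    (hdiag : ∀ i, (r i, c i) ∈ S) (hσ : ∀ i, (r (σ i), c i) ∈ S)
    {i : Fin k} (hi : σ i ≠ i) {x : ι × κ} (hx : x ∈ S) (hxr : x.1 = r i) :
    x.2 = c i ∨ x.2 = c (σ⁻¹ i) := by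
  have hne : (r i, c i) ≠ (r i, c (σ⁻¹ i)) := fun h =>
    hi (by simpa using congrArg σ (hc (Prod.ext_iff.1 h).2))
  have hσi : (r i, c (σ⁻¹ i)) ∈ S := by simpa using hσ (σ⁻¹ i)
  rcases eq_or_eq_of_card_le_two (hrow (r i)) (mem_filter.2 ⟨hdiag i, rfl⟩)
    (mem_filter.2 ⟨hσi, rfl⟩) hne (mem_filter.2 ⟨hx, hxr⟩) with rfl | rfl
  exacts [Or.inl rfl, Or.inr rfl]

theorem eq_one_of_rookGraph_connected [DecidableEq ι] [DecidableEq κ]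
    (hconn : (rookGraph S).Connected)
    (hrow : ∀ i, #(S.filter fun p => p.1 = i) ≤ 2) (hcol : ∀ j, #(S.filter fun p => p.2 = j) ≤ 2)
    (hr : Function.Injective r) (hc : Function.Injective c)
    (hdiag : ∀ i, (r i, c i) ∈ S) (hσ : ∀ i, (r (σ i), c i) ∈ S)
    {w : ι × κ} (hw : w ∈ S) (hwr : w.1 ∉ Set.range r) : σ = 1 := by
  by_contra hσ1
  obtain ⟨i₀, hi₀⟩ : ∃ i, σ i ≠ i := not_forall.1 fun h => hσ1 (Equiv.ext h)
  let P : Set S := {x | ∃ i, σ i ≠ i ∧ x.1.1 = r i}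
  have hcolumn : ∀ x : S, x ∈ P → ∀ y : S, x.1.2 = y.1.2 → y ∈ P := by
    rintro x ⟨i, hi, hxr⟩ y hxy
    have hσi : σ (σ⁻¹ i) ≠ σ⁻¹ i := by
      simpa using fun h => hi (Equiv.Perm.eq_inv_iff_eq.1 h)
    rcases eq_or_eq_of_mem_of_fst_eq hrow hc hdiag hσ hi x.2 hxr with hxc | hxc
    · rcases eq_or_eq_of_mem_of_snd_eq hcol hr hdiag hσ hi y.2 (hxy ▸ hxc) with h | h
      exacts [⟨i, hi, h⟩, ⟨σ i, fun h' => hi (σ.injective h'), h⟩]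
    · rcases eq_or_eq_of_mem_of_snd_eq hcol hr hdiag hσ hσi y.2 (hxy ▸ hxc) with h | h
      exacts [⟨_, hσi, h⟩, ⟨i, hi, by simpa using h⟩]
  have hclosed : ∀ x y : S, (rookGraph S).Adj x y → x ∈ P → y ∈ P := by
    rintro x y hxy hx
    rcases (SimpleGraph.fromRel_adj _ _ _).1 hxy with ⟨-, (h | h) | (h | h)⟩
    · obtain ⟨i, hi, hxr⟩ := hx
      exact ⟨i, hi, h ▸ hxr⟩
    · exact hcolumn x hx y h
    · obtain ⟨i, hi, hxr⟩ := hx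
      exact ⟨i, hi, h ▸ hxr⟩
    · exact hcolumn x hx y h.symm
  obtain ⟨p⟩ := hconn.preconnected ⟨_, hdiag i₀⟩ ⟨w, hw⟩
  obtain ⟨d, -, hd₁, hd₂⟩ := p.exists_boundary_dart P ⟨i₀, hi₀, rfl⟩
    fun ⟨i, _, h⟩ => hwr ⟨i, h.symm⟩
  exact hd₂ (hclosed _ _ d.adj hd₁)

end Cycle

section Generic

variable (R : Type*) [CommRing R] (S : Finset (ι × κ))

noncomputable def genericMatrixOn [DecidableEq ι] [DecidableEq κ] :
    Matrix ι κ (MvPolynomial S R) :=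
  fun i j => if h : (i, j) ∈ S then X ⟨(i, j), h⟩ else 0

def nonAttackingRookMonomials (k : ℕ) : Set (MvPolynomial S R) :=
  {g | ∃ A : Finset S, #A = k ∧ (∀ p ∈ A, ∀ q ∈ A, p ≠ q → p.1.1 ≠ q.1.1 ∧ p.1.2 ≠ q.1.2) ∧
    g = ∏ p ∈ A, X p}

theorem mem_nonAttackingRookMonomials_iff {k : ℕ} {g : MvPolynomial S R} :
    g ∈ nonAttackingRookMonomials R S k ↔
      ∃ p : Fin k → S, Function.Injective (fun i => (p i).1.1) ∧
        Function.Injective (fun i => (p i).1.2) ∧ g = ∏ i, X (p i) := by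
  constructor
  · rintro ⟨A, hA, hind, rfl⟩
    let e : Fin k ≃ A := (A.equivFinOfCardEq hA).symm
    have hne {i j : Fin k} (hij : i ≠ j) : (e i : S) ≠ e j := fun h =>
      hij (e.injective (Subtype.ext h))
    refine ⟨fun i => e i, fun i j h => ?_, fun i j h => ?_, ?_⟩
    · by_contra hij
      exact (hind _ (e i).2 _ (e j).2 (hne hij)).1 h
    · by_contra hij
      exact (hind _ (e i).2 _ (e j).2 (hne hij)).2 h
    · rw [← A.prod_coe_sort]
      exact (e.prod_comp fun p : A => X (p : S)).symm
  · rintro ⟨p, hpr, hpc, rfl⟩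
    have hp : Function.Injective p := fun i j h => hpr (congrArg (fun x : S => x.1.1) h)
    refine ⟨univ.map ⟨p, hp⟩, by simp, ?_, by simp⟩
    simp only [mem_map, mem_univ, true_and, Function.Embedding.coeFn_mk]
    rintro _ ⟨i, rfl⟩ _ ⟨j, rfl⟩ hij
    have hij : i ≠ j := fun h => hij (h ▸ rfl)
    exact ⟨fun h => hij (hpr h), fun h => hij (hpc h)⟩

variable [DecidableEq ι] [DecidableEq κ] {m : Type*} [Fintype m] {r : m → ι} {c : m → κ}

theorem prod_genericMatrixOn_of_mem (h : ∀ i, (r i, c i) ∈ S) :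
    ∏ i, genericMatrixOn R S (r i) (c i) = ∏ i, X ⟨(r i, c i), h i⟩ :=
  prod_congr rfl fun i _ => dif_pos (h i)

theorem prod_genericMatrixOn_eq_zero {i : m} (h : (r i, c i) ∉ S) :
    ∏ i, genericMatrixOn R S (r i) (c i) = 0 :=
  prod_eq_zero (mem_univ i) (dif_neg h)

end Generic

section Minors

variable {R : Type*} [CommRing R] [DecidableEq ι] [DecidableEq κ] {S : Finset (ι × κ)} {k : ℕ}

theorem det_submatrix_genericMatrixOn_mem_span {r : Fin k → ι} {c : Fin k → κ}
    (hr : Function.Injective r) (hc : Function.Injective c) :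
    ((genericMatrixOn R S).submatrix r c).det ∈
      Ideal.span (nonAttackingRookMonomials R S k) := by
  rw [Matrix.det_apply]
  refine Ideal.sum_mem _ fun σ _ => ?_
  simp only [Matrix.submatrix_apply]
  by_cases h : ∀ i, (r (σ i), c i) ∈ S
  · rw [prod_genericMatrixOn_of_mem R S h, Units.smul_def, zsmul_eq_mul]
    refine Ideal.mul_mem_left _ _ (Ideal.subset_span ?_)
    exact (mem_nonAttackingRookMonomials_iff R S).2
      ⟨_, hr.comp σ.injective, hc, rfl⟩
  · obtain ⟨i, hi⟩ := not_forall.1 h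
    rw [prod_genericMatrixOn_eq_zero R S hi, smul_zero]
    exact Ideal.zero_mem _

theorem det_submatrix_genericMatrixOn_eq_prod (hconn : (rookGraph S).Connected)
    (hrow : ∀ i, #(S.filter fun p => p.1 = i) ≤ 2) (hcol : ∀ j, #(S.filter fun p => p.2 = j) ≤ 2)
    {p : Fin k → S} (hpr : Function.Injective fun i => (p i).1.1)
    (hpc : Function.Injective fun i => (p i).1.2)
    {w : ι × κ} (hw : w ∈ S) (hwr : w.1 ∉ Set.range fun i => (p i).1.1) :
    ((genericMatrixOn R S).submatrix (fun i => (p i).1.1) (fun i => (p i).1.2)).det =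
      ∏ i, X (p i) := by
  rw [Matrix.det_apply, sum_eq_single 1]
  · simp only [Equiv.Perm.sign_one, one_smul, Equiv.Perm.one_apply, Matrix.submatrix_apply]
    exact prod_genericMatrixOn_of_mem R S fun i => (p i).2
  · intro σ _ hσ
    obtain ⟨i, hi⟩ : ∃ i, ((p (σ i)).1.1, (p i).1.2) ∉ S := not_forall.1 fun h =>
      hσ (eq_one_of_rookGraph_connected hconn hrow hcol hpr hpc (fun i => (p i).2) h hw hwr)
    simp only [Matrix.submatrix_apply]
    rw [prod_genericMatrixOn_eq_zero R S hi, smul_zero]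
  · exact fun h => (h (mem_univ _)).elim

end Minors

theorem exists_mem_fst_not_mem_range [Fintype ι] [DecidableEq ι] {S : Finset (ι × κ)}
    (hrow : ∀ i, (S.filter fun p => p.1 = i).Nonempty) {k : ℕ} (hk : k < Fintype.card ι)
    (r : Fin k → ι) : ∃ w ∈ S, w.1 ∉ Set.range r := by
  obtain ⟨i, hi⟩ : ∃ i, i ∉ Set.range r := by
    by_contra! h
    have := Fintype.card_le_of_surjective r h
    simp only [Fintype.card_fin] at this
    omega
  obtain ⟨w, hw⟩ := hrow i
  obtain ⟨hwS, rfl⟩ := mem_filter.1 hw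
  exact ⟨w, hwS, hi⟩

end RookPlacements

theorem minors_of_cycle_matrix_general (K : Type*) [Field K] (n : ℕ)
    (S : Finset (Fin n × Fin n))
    (hrow : ∀ i : Fin n, (S.filter fun p => p.1 = i).card = 2)
    (hcol : ∀ j : Fin n, (S.filter fun p => p.2 = j).card = 2)
    (hconn : (SimpleGraph.fromRel
      (fun p q : {p : Fin n × Fin n // p ∈ S} =>
        (p : Fin n × Fin n).1 = (q : Fin n × Fin n).1 ∨
        (p : Fin n × Fin n).2 = (q : Fin n × Fin n).2)).Connected)
    (Y : Matrix (Fin n) (Fin n) (MvPolynomial {p : Fin n × Fin n // p ∈ S} K))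
    (hY : ∀ i j, Y i j =
      if h : (i, j) ∈ S then X (⟨(i, j), h⟩ : {p : Fin n × Fin n // p ∈ S})
      else 0)
    (k : ℕ) (hkn : k < n) :
    Ideal.span {f : MvPolynomial {p : Fin n × Fin n // p ∈ S} K |
        ∃ r c : Fin k → Fin n,
          Function.Injective r ∧ Function.Injective c ∧
          f = (Y.submatrix r c).det}
      = Ideal.span {g : MvPolynomial {p : Fin n × Fin n // p ∈ S} K |
          ∃ A : Finset {p : Fin n × Fin n // p ∈ S}, A.card = k ∧
            (∀ p ∈ A, ∀ q ∈ A, p ≠ q →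
              (p : Fin n × Fin n).1 ≠ (q : Fin n × Fin n).1 ∧
              (p : Fin n × Fin n).2 ≠ (q : Fin n × Fin n).2) ∧
            g = ∏ p ∈ A, X p} := by
  obtain rfl : Y = genericMatrixOn K S := Matrix.ext hY
  refine le_antisymm (Ideal.span_le.2 ?_) (Ideal.span_le.2 ?_)
  · rintro _ ⟨r, c, hr, hc, rfl⟩
    exact det_submatrix_genericMatrixOn_mem_span hr hc
  · intro g hg
    obtain ⟨p, hpr, hpc, rfl⟩ := (mem_nonAttackingRookMonomials_iff K S).1 hg
    obtain ⟨w, hw, hwr⟩ := exists_mem_fst_not_mem_range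
      (fun i => card_pos.1 (by rw [hrow i]; norm_num)) (by simpa using hkn) _
    refine Ideal.subset_span ⟨_, _, hpr, hpc, ?_⟩
    exact (det_submatrix_genericMatrixOn_eq_prod hconn (fun i => (hrow i).le)
      (fun j => (hcol j).le) hpr hpc hw hwr).symm

/-- Let `S` be a set of positions in an `n × n` grid such that every row
index and every column index occurs in exactly two elements of `S`, and such
that the graph on `S` in which two distinct positions are adjacent iff they
share a row or a column is connected. Let `Y` be the matrix over
`K[x_p : p ∈ S]` whose entry at a position in `S` is the corresponding
variable and whose other entries are `0`. Then for `1 ≤ k < n` the ideal of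
`k`-minors of `Y` is generated by the monomials `∏_{p ∈ A} x_p`, where `A`
ranges over the `k`-element subsets of `S` whose elements lie in pairwise
distinct rows and pairwise distinct columns. -/
theorem minors_of_cycle_matrix (K : Type*) [Field K] (n : ℕ) (hn : 2 ≤ n)
    (S : Finset (Fin n × Fin n))
    (hrow : ∀ i : Fin n, (S.filter fun p => p.1 = i).card = 2)
    (hcol : ∀ j : Fin n, (S.filter fun p => p.2 = j).card = 2)
    (hconn : (SimpleGraph.fromRel
      (fun p q : {p : Fin n × Fin n // p ∈ S} =>
        (p : Fin n × Fin n).1 = (q : Fin n × Fin n).1 ∨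
        (p : Fin n × Fin n).2 = (q : Fin n × Fin n).2)).Connected)
    (Y : Matrix (Fin n) (Fin n) (MvPolynomial {p : Fin n × Fin n // p ∈ S} K))
    (hY : ∀ i j, Y i j =
      if h : (i, j) ∈ S then X (⟨(i, j), h⟩ : {p : Fin n × Fin n // p ∈ S})
      else 0)
    (k : ℕ) (hk1 : 1 ≤ k) (hkn : k < n) :
    Ideal.span {f : MvPolynomial {p : Fin n × Fin n // p ∈ S} K |
        ∃ r c : Fin k → Fin n,
          Function.Injective r ∧ Function.Injective c ∧
          f = (Y.submatrix r c).det}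
      = Ideal.span {g : MvPolynomial {p : Fin n × Fin n // p ∈ S} K |
          ∃ A : Finset {p : Fin n × Fin n // p ∈ S}, A.card = k ∧
            (∀ p ∈ A, ∀ q ∈ A, p ≠ q →
              (p : Fin n × Fin n).1 ≠ (q : Fin n × Fin n).1 ∧
              (p : Fin n × Fin n).2 ≠ (q : Fin n × Fin n).2) ∧
            g = ∏ p ∈ A, X p} :=
  minors_of_cycle_matrix_general K n S hrow hcol hconn Y hY k hkn
end

section
/- Let K be a field and n ≥ 2 an integer. Let S ⊆ {1,…,n} × {1,…,n} be a set of positions such that every row index occurs in exactly two elements of S, every column index occurs in exactly two elements of S, and the graph with vertex set S, in which two distinct positions are adjacent if and only if they have the same row index or the same column index, is connected. Let Y be the n × n matrix over K[x_p : p ∈ S] whose (i,j) entry is x_{(i,j)} if (i,j) ∈ S and 0 otherwise. Then for every integer k with 1 ≤ k < n and every choice of k distinct rows and k distinct columns, the determinant of the corresponding k × k submatrix of Y is either 0 or equal to ε · ∏_{p ∈ A} x_p for some sign ε ∈ {1, −1} and some k-element subset A ⊆ S. -/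
open MvPolynomial

/-- Let `S` be a set of positions in an `n × n` grid such that every row
index and every column index occurs in exactly two elements of `S`, and such
that the graph on `S` in which two distinct positions are adjacent iff they
share a row or a column is connected. Let `Y` be the matrix over
`K[x_p : p ∈ S]` whose entry at a position in `S` is the corresponding
variable and whose other entries are `0`. Then for `1 ≤ k < n`, the
determinant of every `k × k` submatrix of `Y` is either `0` or equal to
`± ∏_{p ∈ A} x_p` for some `k`-element subset `A ⊆ S`. -/
theorem submatrix_det_is_monomial (K : Type*) [Field K] (n : ℕ) (hn : 2 ≤ n)
    (S : Finset (Fin n × Fin n))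
    (hrow : ∀ i : Fin n, (S.filter fun p => p.1 = i).card = 2)
    (hcol : ∀ j : Fin n, (S.filter fun p => p.2 = j).card = 2)
    (hconn : (SimpleGraph.fromRel
      (fun p q : {p : Fin n × Fin n // p ∈ S} =>
        (p : Fin n × Fin n).1 = (q : Fin n × Fin n).1 ∨
        (p : Fin n × Fin n).2 = (q : Fin n × Fin n).2)).Connected)
    (Y : Matrix (Fin n) (Fin n) (MvPolynomial {p : Fin n × Fin n // p ∈ S} K))
    (hY : ∀ i j, Y i j =
      if h : (i, j) ∈ S then X (⟨(i, j), h⟩ : {p : Fin n × Fin n // p ∈ S})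
      else 0)
    (k : ℕ) (hk1 : 1 ≤ k) (hkn : k < n)
    (r c : Fin k → Fin n) (hr : Function.Injective r)
    (hc : Function.Injective c) :
    (Y.submatrix r c).det = 0 ∨
    ∃ A : Finset {p : Fin n × Fin n // p ∈ S}, A.card = k ∧
      ((Y.submatrix r c).det = ∏ p ∈ A, X p ∨
       (Y.submatrix r c).det = -∏ p ∈ A, X p) := by
  classical
  -- a 2-element finset containing two distinct elements is exactly those two
  have pair : ∀ (s : Finset (Fin n × Fin n)), s.card = 2 →
      ∀ a b : Fin n × Fin n, a ∈ s → b ∈ s → a ≠ b → ∀ x ∈ s, x = a ∨ x = b := by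
    intro s hs a b ha hb hab x hx
    have hsub : ({a, b} : Finset (Fin n × Fin n)) ⊆ s := by
      intro y hy
      simp only [Finset.mem_insert, Finset.mem_singleton] at hy
      rcases hy with rfl | rfl <;> assumption
    have hcard : ({a, b} : Finset (Fin n × Fin n)).card = 2 := by
      rw [Finset.card_insert_of_notMem (by simpa using hab), Finset.card_singleton]
    have : s = ({a, b} : Finset (Fin n × Fin n)) :=
      (Finset.eq_of_subset_of_card_le hsub (by omega)).symm
    rw [this] at hx
    simpa using hx
  set V : Equiv.Perm (Fin k) → Prop := fun σ => ∀ i, (r (σ i), c i) ∈ S with hV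
  have uniq : ∀ σ τ : Equiv.Perm (Fin k), V σ → V τ → σ = τ := by
    intro σ τ hσ hτ
    by_contra hne
    have hD : ∃ i, σ i ≠ τ i := by
      by_contra h; push_neg at h; exact hne (Equiv.ext h)
    set G := (SimpleGraph.fromRel
      (fun p q : {p : Fin n × Fin n // p ∈ S} =>
        (p : Fin n × Fin n).1 = (q : Fin n × Fin n).1 ∨
        (p : Fin n × Fin n).2 = (q : Fin n × Fin n).2)) with hG
    set T : Set {p : Fin n × Fin n // p ∈ S} :=
      {p | ∃ i, σ i ≠ τ i ∧ ((p : Fin n × Fin n) = (r (σ i), c i) ∨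
        (p : Fin n × Fin n) = (r (τ i), c i))} with hT
    have hclosed : ∀ p q, G.Adj p q → p ∈ T → q ∈ T := by
      intro p q hadj hp
      obtain ⟨i, hi, hpi⟩ := hp
      have hne' : (q : Fin n × Fin n) ≠ (p : Fin n × Fin n) := by
        intro h; exact hadj.ne' (Subtype.ext h)
      have hshare : (p : Fin n × Fin n).1 = (q : Fin n × Fin n).1 ∨
          (p : Fin n × Fin n).2 = (q : Fin n × Fin n).2 := by
        rcases hadj.2 with h | h
        · exact h
        · rcases h with h | h
          · exact Or.inl h.symm
          · exact Or.inr h.symm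
      rcases hpi with hpv | hpv
      · rcases hshare with hrow' | hcol'
        · -- same row as (r (σ i), c i); row r (σ i)
          set j := τ.symm (σ i) with hj
          have hτj : τ j = σ i := τ.apply_symm_apply _
          have hji : j ≠ i := by
            intro h; rw [h] at hτj; exact hi hτj.symm
          have hjD : σ j ≠ τ j := by
            intro h; exact hji (σ.injective (h.trans hτj))
          have h1 : (r (σ i), c i) ∈ S.filter fun p => p.1 = r (σ i) := by
            simp [hσ i]
          have h2 : (r (τ j), c j) ∈ S.filter fun p => p.1 = r (σ i) :=
            Finset.mem_filter.2 ⟨hτ j, by simp [hτj]⟩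
          have hq : (q : Fin n × Fin n) ∈ S.filter fun p => p.1 = r (σ i) := by
            simp only [Finset.mem_filter]
            refine ⟨q.2, ?_⟩
            rw [← hrow', hpv]
          have h12 : ((r (σ i), c i) : Fin n × Fin n) ≠ (r (τ j), c j) := by
            intro h
            exact hji (hc (congrArg Prod.snd h)).symm
          rcases pair _ (hrow (r (σ i))) _ _ h1 h2 h12 _ hq with h | h
          · exact absurd (h.trans hpv.symm) hne'
          · exact ⟨j, hjD, Or.inr h⟩
        · -- same column c i
          have h1 : (r (σ i), c i) ∈ S.filter fun p => p.2 = c i := by simp [hσ i]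
          have h2 : (r (τ i), c i) ∈ S.filter fun p => p.2 = c i := by simp [hτ i]
          have hq : (q : Fin n × Fin n) ∈ S.filter fun p => p.2 = c i := by
            simp only [Finset.mem_filter]
            refine ⟨q.2, ?_⟩
            rw [← hcol', hpv]
          have h12 : ((r (σ i), c i) : Fin n × Fin n) ≠ (r (τ i), c i) := by
            intro h
            exact hi (hr (congrArg Prod.fst h))
          rcases pair _ (hcol (c i)) _ _ h1 h2 h12 _ hq with h | h
          · exact absurd (h.trans hpv.symm) hne'
          · exact ⟨i, hi, Or.inr h⟩
      · rcases hshare with hrow' | hcol'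
        · set j := σ.symm (τ i) with hj
          have hσj : σ j = τ i := σ.apply_symm_apply _
          have hji : j ≠ i := by
            intro h; rw [h] at hσj; exact hi hσj
          have hjD : σ j ≠ τ j := by
            intro h; exact hji (τ.injective (h.symm.trans hσj))
          have h1 : (r (τ i), c i) ∈ S.filter fun p => p.1 = r (τ i) := by
            simp [hτ i]
          have h2 : (r (σ j), c j) ∈ S.filter fun p => p.1 = r (τ i) :=
            Finset.mem_filter.2 ⟨hσ j, by simp [hσj]⟩
          have hq : (q : Fin n × Fin n) ∈ S.filter fun p => p.1 = r (τ i) := by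
            simp only [Finset.mem_filter]
            refine ⟨q.2, ?_⟩
            rw [← hrow', hpv]
          have h12 : ((r (τ i), c i) : Fin n × Fin n) ≠ (r (σ j), c j) := by
            intro h
            exact hji (hc (congrArg Prod.snd h)).symm
          rcases pair _ (hrow (r (τ i))) _ _ h1 h2 h12 _ hq with h | h
          · exact absurd (h.trans hpv.symm) hne'
          · exact ⟨j, hjD, Or.inl h⟩
        · have h1 : (r (σ i), c i) ∈ S.filter fun p => p.2 = c i := by simp [hσ i]
          have h2 : (r (τ i), c i) ∈ S.filter fun p => p.2 = c i := by simp [hτ i]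
          have hq : (q : Fin n × Fin n) ∈ S.filter fun p => p.2 = c i := by
            simp only [Finset.mem_filter]
            refine ⟨q.2, ?_⟩
            rw [← hcol', hpv]
          have h12 : ((r (σ i), c i) : Fin n × Fin n) ≠ (r (τ i), c i) := by
            intro h
            exact hi (hr (congrArg Prod.fst h))
          rcases pair _ (hcol (c i)) _ _ h1 h2 h12 _ hq with h | h
          · exact ⟨i, hi, Or.inl h⟩
          · exact absurd (h.trans hpv.symm) hne'
    have hwalk : ∀ a b : {p : Fin n × Fin n // p ∈ S}, G.Walk a b → a ∈ T → b ∈ T := by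
      intro a b w
      induction w with
      | nil => exact id
      | cons h _ ih => exact fun ha => ih (hclosed _ _ h ha)
    obtain ⟨i0, hi0⟩ := hD
    have hall : ∀ q : {p : Fin n × Fin n // p ∈ S}, q ∈ T := by
      intro q
      obtain ⟨w⟩ := hconn.preconnected ⟨(r (σ i0), c i0), hσ i0⟩ q
      exact hwalk _ _ w ⟨i0, hi0, Or.inl rfl⟩
    -- cardinality contradiction
    set T' : Finset {p : Fin n × Fin n // p ∈ S} :=
      (Finset.univ.image fun i : Fin k => (⟨(r (σ i), c i), hσ i⟩ : {p : Fin n × Fin n // p ∈ S}))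
      ∪ (Finset.univ.image fun i : Fin k => (⟨(r (τ i), c i), hτ i⟩ : {p : Fin n × Fin n // p ∈ S}))
      with hT'
    have hsub : (Finset.univ : Finset {p : Fin n × Fin n // p ∈ S}) ⊆ T' := by
      intro q _
      obtain ⟨i, _, h | h⟩ := hall q
      · exact Finset.mem_union_left _ (Finset.mem_image.2 ⟨i, Finset.mem_univ _, Subtype.ext h.symm⟩)
      · exact Finset.mem_union_right _ (Finset.mem_image.2 ⟨i, Finset.mem_univ _, Subtype.ext h.symm⟩)
    have hcardS : Fintype.card {p : Fin n × Fin n // p ∈ S} = 2 * n := by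
      rw [Fintype.card_coe]
      have := Finset.card_eq_sum_card_fiberwise
        (f := fun p : Fin n × Fin n => p.2) (t := (Finset.univ : Finset (Fin n)))
        (s := S) (fun x _ => Finset.mem_univ _)
      rw [this]
      simp [hcol, Finset.sum_const, mul_comm]
    have hle : Fintype.card {p : Fin n × Fin n // p ∈ S} ≤ 2 * k := by
      calc Fintype.card {p : Fin n × Fin n // p ∈ S}
          = (Finset.univ : Finset {p : Fin n × Fin n // p ∈ S}).card := Finset.card_univ.symm
        _ ≤ T'.card := Finset.card_le_card hsub
        _ ≤ k + k := le_trans (Finset.card_union_le _ _)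
            (add_le_add (le_trans (Finset.card_image_le) (by simp))
              (le_trans (Finset.card_image_le) (by simp)))
        _ = 2 * k := by ring
    omega
  -- main case split
  by_cases hex : ∃ σ : Equiv.Perm (Fin k), V σ
  · obtain ⟨σ, hσ⟩ := hex
    right
    have hinj : Function.Injective
        (fun i : Fin k => (⟨(r (σ i), c i), hσ i⟩ : {p : Fin n × Fin n // p ∈ S})) := by
      intro a b h
      have h2 := congrArg Prod.snd (congrArg Subtype.val h)
      exact hc h2
    refine ⟨Finset.univ.image fun i : Fin k =>
      (⟨(r (σ i), c i), hσ i⟩ : {p : Fin n × Fin n // p ∈ S}), ?_, ?_⟩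
    · rw [Finset.card_image_of_injective _ hinj, Finset.card_univ, Fintype.card_fin]
    · have hprod : (∏ p ∈ Finset.univ.image fun i : Fin k =>
          (⟨(r (σ i), c i), hσ i⟩ : {p : Fin n × Fin n // p ∈ S}), X p)
          = ∏ i : Fin k, (X (⟨(r (σ i), c i), hσ i⟩ : {p : Fin n × Fin n // p ∈ S})
            : MvPolynomial {p : Fin n × Fin n // p ∈ S} K) := by
        exact Finset.prod_image (fun a _ b _ h => hinj h)
      have hdet : (Y.submatrix r c).det = Equiv.Perm.sign σ •
          ∏ i : Fin k, (X (⟨(r (σ i), c i), hσ i⟩ : {p : Fin n × Fin n // p ∈ S})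
            : MvPolynomial {p : Fin n × Fin n // p ∈ S} K) := by
        rw [Matrix.det_apply]
        rw [Finset.sum_eq_single σ]
        · congr 1
          apply Finset.prod_congr rfl
          intro i _
          simp only [Matrix.submatrix_apply]
          rw [hY]
          rw [dif_pos (hσ i)]
        · intro τ _ hτσ
          have hτ : ¬ V τ := fun h => hτσ (uniq τ σ h hσ)
          simp only [hV, not_forall] at hτ
          obtain ⟨i, hi⟩ := hτ
          have : (Y.submatrix r c) (τ i) i = 0 := by
            simp only [Matrix.submatrix_apply]
            rw [hY, dif_neg hi]
          have hp0 : (∏ j : Fin k, (Y.submatrix r c) (τ j) j) = 0 :=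
            Finset.prod_eq_zero (Finset.mem_univ i) this
          rw [hp0, smul_zero]
        · intro h; exact absurd (Finset.mem_univ σ) h
      rw [hdet, hprod]
      rcases Int.units_eq_one_or (Equiv.Perm.sign σ) with h | h <;> rw [h]
      · left; simp
      · right; simp
  · left
    rw [Matrix.det_apply]
    apply Finset.sum_eq_zero
    intro τ _
    have hτ : ¬ V τ := fun h => hex ⟨τ, h⟩
    simp only [hV, not_forall] at hτ
    obtain ⟨i, hi⟩ := hτ
    have : (Y.submatrix r c) (τ i) i = 0 := by
      simp only [Matrix.submatrix_apply]
      rw [hY, dif_neg hi]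
    have hp0 : (∏ j : Fin k, (Y.submatrix r c) (τ j) j) = 0 :=
      Finset.prod_eq_zero (Finset.mem_univ i) this
    rw [hp0, smul_zero]
end

section
/- Let n ≥ 3 be an integer and let C be the cycle graph with vertex set Z/2nZ in which i and i+1 are adjacent for every i. A set S of vertices of C is maximal (with respect to inclusion) among vertex sets containing no independent set of size n − 1 if and only if S is a union of n − 2 pairwise vertex-disjoint edges of C. In particular, every such maximal set has exactly 2n − 4 elements. -/
/-- `T` is an independent set in the cycle graph on `ℤ/2nℤ` (where `i` and
`i+1` are adjacent): no two of its elements are adjacent. -/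
def CycIndep (n : ℕ) (T : Finset (ZMod (2 * n))) : Prop :=
  ∀ p ∈ T, ∀ q ∈ T, q ≠ p + 1

/-- `S` contains no independent set of size `n - 1` of the cycle graph on
`ℤ/2nℤ`. -/
def NoBigIndep (n : ℕ) (S : Finset (ZMod (2 * n))) : Prop :=
  ¬ ∃ T ⊆ S, T.card = n - 1 ∧ CycIndep n T

/-- `S` is a union of `n - 2` pairwise vertex-disjoint edges of the cycle
graph on `ℤ/2nℤ` (an edge is a pair `{i, i+1}`). -/
def IsDisjointEdgeUnion (n : ℕ) (S : Finset (ZMod (2 * n))) : Prop :=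
  ∃ B : Finset (ZMod (2 * n)), B.card = n - 2 ∧
    (∀ i ∈ B, ∀ j ∈ B, i ≠ j →
      Disjoint ({i, i + 1} : Finset (ZMod (2 * n))) {j, j + 1}) ∧
    S = B.biUnion (fun i => {i, i + 1})

/-!
Walking backwards from a vertex `x`, one leaves `S` after `runLength S x` steps, because `S`
misses some vertex. The vertices of `S` with odd run length form an independent set `E ⊆ S`
whose edges `{e, e + 1}` cover `S`; as each edge holds at most one vertex of an independent set,
`E` is a largest independent subset of `S`. For maximal `S`, adding `e + 1` keeps this cover, so
`e + 1 ∈ S`; and `|E| = n - 2`, since adding a missing vertex raises the bound by only one.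
Conversely, if `S` is a union of `n - 2` disjoint edges and `v ∉ S`, choosing on each edge the
endpoint with the parity of `v` gives, together with `v`, an independent set of size `n - 1`.
-/

namespace EvenCycle

open Finset

variable {n : ℕ}

instance nontrivial_zmod_two_mul (n : ℕ) : Nontrivial (ZMod (2 * n)) :=
  ZMod.nontrivial_iff.2 (by omega)

def edgeUnion (B : Finset (ZMod (2 * n))) : Finset (ZMod (2 * n)) :=
  B.biUnion fun i => {i, i + 1}

theorem mem_edgeUnion {B : Finset (ZMod (2 * n))} {x : ZMod (2 * n)} :
    x ∈ edgeUnion B ↔ x ∈ B ∨ x - 1 ∈ B := by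
  simp only [edgeUnion, mem_biUnion, mem_insert, mem_singleton]
  constructor
  · rintro ⟨i, hi, rfl | rfl⟩
    exacts [Or.inl hi, Or.inr (by rwa [add_sub_cancel_right])]
  · rintro (h | h)
    exacts [⟨x, h, Or.inl rfl⟩, ⟨x - 1, h, Or.inr (sub_add_cancel x 1).symm⟩]

theorem card_le_of_subset_edgeUnion {B T : Finset (ZMod (2 * n))} (hT : CycIndep n T)
    (hTB : T ⊆ edgeUnion B) : T.card ≤ B.card := by
  classical
  refine card_le_card_of_injOn (fun t => if t ∈ B then t else t - 1)
    (fun t ht => ?_) (fun t ht t' ht' h => ?_)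
  · have := mem_edgeUnion.1 (hTB ht)
    dsimp only
    split_ifs <;> tauto
  · dsimp only at h
    split_ifs at h
    · exact h
    · exact absurd (by rw [h, sub_add_cancel]) (hT t ht t' ht')
    · exact absurd (by rw [← h, sub_add_cancel]) (hT t' ht' t ht)
    · exact sub_left_injective h

theorem noBigIndep_of_subset_edgeUnion {B S : Finset (ZMod (2 * n))} (hSB : S ⊆ edgeUnion B)
    (hB : B.card < n - 1) : NoBigIndep n S := by
  rintro ⟨T, hTS, hT, hTind⟩
  have := card_le_of_subset_edgeUnion hTind (hTS.trans hSB)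
  omega

theorem card_lt_of_noBigIndep {S T : Finset (ZMod (2 * n))} (hS : NoBigIndep n S)
    (hTS : T ⊆ S) (hT : CycIndep n T) : T.card < n - 1 := by
  by_contra! h
  obtain ⟨T', hT'T, hT'⟩ := exists_subset_card_eq h
  exact hS ⟨T', hT'T.trans hTS, hT', fun p hp q hq => hT p (hT'T hp) q (hT'T hq)⟩

theorem edges_disjoint_of_cycIndep {B : Finset (ZMod (2 * n))} (hB : CycIndep n B) :
    ∀ i ∈ B, ∀ j ∈ B, i ≠ j → Disjoint ({i, i + 1} : Finset (ZMod (2 * n))) {j, j + 1} := by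
  intro i hi j hj hij
  have := hB i hi j hj
  have := hB j hj i hi
  simp only [disjoint_left, mem_insert, mem_singleton]
  grind

theorem card_edgeUnion {B : Finset (ZMod (2 * n))}
    (hB : ∀ i ∈ B, ∀ j ∈ B, i ≠ j → Disjoint ({i, i + 1} : Finset (ZMod (2 * n))) {j, j + 1}) :
    (edgeUnion B).card = 2 * B.card := by
  rw [edgeUnion, card_biUnion hB, sum_const_nat fun i _ => card_pair (by simp), mul_comm]

def parity (n : ℕ) : ZMod (2 * n) →+* ZMod 2 :=
  ZMod.castHom (dvd_mul_right 2 n) (ZMod 2)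

theorem cycIndep_of_parity_eq {T : Finset (ZMod (2 * n))} {a : ZMod 2}
    (h : ∀ x ∈ T, parity n x = a) : CycIndep n T := by
  rintro p hp _ hq rfl
  have h1 := h _ hq
  rw [map_add, map_one, h p hp, add_eq_left] at h1
  exact one_ne_zero h1

theorem exists_mem_edge_parity_eq (i : ZMod (2 * n)) (a : ZMod 2) :
    ∃ c ∈ ({i, i + 1} : Finset (ZMod (2 * n))), parity n c = a := by
  by_cases h : parity n i = a
  · exact ⟨i, by simp, h⟩
  · refine ⟨i + 1, by simp, ?_⟩
    rw [map_add, map_one]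
    generalize parity n i = b at h
    revert a b
    decide

theorem exists_cycIndep_insert_edgeUnion {B : Finset (ZMod (2 * n))} {v : ZMod (2 * n)}
    (hB : ∀ i ∈ B, ∀ j ∈ B, i ≠ j → Disjoint ({i, i + 1} : Finset (ZMod (2 * n))) {j, j + 1})
    (hv : v ∉ edgeUnion B) :
    ∃ T ⊆ insert v (edgeUnion B), CycIndep n T ∧ T.card = B.card + 1 := by
  choose c hc hcv using fun i => exists_mem_edge_parity_eq (n := n) i (parity n v)
  have hcB : ∀ i ∈ B, c i ∈ edgeUnion B := fun i hi => mem_biUnion.2 ⟨i, hi, hc i⟩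
  have hinj : Set.InjOn c B := fun i hi j hj h =>
    by_contra fun hij => disjoint_left.1 (hB i hi j hj hij) (hc i) (h ▸ hc j)
  have hvc : v ∉ B.image c := by
    simp only [mem_image, not_exists, not_and]
    exact fun i hi h => hv (h ▸ hcB i hi)
  refine ⟨insert v (B.image c), insert_subset_insert _ (image_subset_iff.2 hcB),
    cycIndep_of_parity_eq (a := parity n v) ?_,
    by rw [card_insert_of_notMem hvc, card_image_of_injOn hinj]⟩
  simp only [mem_insert, mem_image]
  rintro x (rfl | ⟨i, -, rfl⟩)
  exacts [rfl, hcv i]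

theorem exists_notMem_of_noBigIndep {S : Finset (ZMod (2 * n))} (hS : NoBigIndep n S) :
    ∃ u, u ∉ S := by
  by_contra! h
  refine hS ⟨(range (n - 1)).image fun k => ((2 * k : ℕ) : ZMod (2 * n)), fun x _ => h x, ?_,
    cycIndep_of_parity_eq (a := 0) ?_⟩
  · rw [card_image_of_injOn, card_range]
    intro k hk l hl hkl
    simp only [coe_range, Set.mem_Iio] at hk hl
    rw [ZMod.natCast_eq_natCast_iff', Nat.mod_eq_of_lt (by omega), Nat.mod_eq_of_lt (by omega)]
      at hkl
    omega
  · intro x hx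
    obtain ⟨k, -, rfl⟩ := mem_image.1 hx
    rw [parity, map_natCast, ZMod.natCast_eq_zero_iff]
    exact dvd_mul_right 2 k

noncomputable def runLength (S : Finset (ZMod (2 * n))) (x : ZMod (2 * n)) : ℕ :=
  sInf {j : ℕ | x - j ∉ S}

theorem runLength_eq_zero {S : Finset (ZMod (2 * n))} {x : ZMod (2 * n)} (hx : x ∉ S) :
    runLength S x = 0 :=
  Nat.sInf_eq_zero.2 (Or.inl (by simpa using hx))

theorem runLength_sub_one_add_one [NeZero n] {S : Finset (ZMod (2 * n))} {u x : ZMod (2 * n)}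
    (hu : u ∉ S) (hx : x ∈ S) : runLength S (x - 1) + 1 = runLength S x := by
  have hne : {j : ℕ | x - j ∉ S}.Nonempty :=
    ⟨(x - u).val, by simpa [ZMod.natCast_zmod_val] using hu⟩
  have hpos : 1 ≤ runLength S x := by
    refine Nat.one_le_iff_ne_zero.2 fun h => ?_
    rcases Nat.sInf_eq_zero.1 h with h0 | hempty
    · exact h0 (by simpa using hx)
    · exact hne.ne_empty hempty
  rw [runLength, runLength, ← Nat.sInf_add hpos]
  congr 3
  ext j
  simp only [Nat.cast_add, Nat.cast_one, sub_sub, add_comm]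

theorem exists_cycIndep_subset_edgeUnion [NeZero n] {S : Finset (ZMod (2 * n))}
    {u : ZMod (2 * n)} (hu : u ∉ S) : ∃ E ⊆ S, CycIndep n E ∧ S ⊆ edgeUnion E := by
  refine ⟨S.filter fun x => Odd (runLength S x), filter_subset _ _, ?_, fun x hx => ?_⟩
  · rintro p hp _ hq rfl
    rw [mem_filter] at hp hq
    rw [← runLength_sub_one_add_one hu hq.1, add_sub_cancel_right, Nat.odd_add_one] at hq
    exact hq.2 hp.2
  · rw [mem_edgeUnion, mem_filter, mem_filter]
    by_cases h : Odd (runLength S x)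
    · exact Or.inl ⟨hx, h⟩
    · rw [← runLength_sub_one_add_one hu hx, Nat.odd_add_one, not_not] at h
      refine Or.inr ⟨by_contra fun h' => ?_, h⟩
      rw [runLength_eq_zero h'] at h
      exact Nat.not_odd_zero h

theorem isDisjointEdgeUnion_of_maximal [NeZero n] {S : Finset (ZMod (2 * n))}
    (hS : NoBigIndep n S) (hmax : ∀ S', NoBigIndep n S' → S ⊆ S' → S = S') :
    IsDisjointEdgeUnion n S := by
  have mem_of_insert : ∀ v, NoBigIndep n (insert v S) → v ∈ S := fun v h =>
    (hmax _ h (subset_insert v S)) ▸ mem_insert_self v S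
  obtain ⟨u, hu⟩ := exists_notMem_of_noBigIndep hS
  obtain ⟨E, hES, hE, hSE⟩ := exists_cycIndep_subset_edgeUnion hu
  have hElt : E.card < n - 1 := card_lt_of_noBigIndep hS hES hE
  have hsucc : ∀ y ∈ E, y + 1 ∈ S := fun y hy => mem_of_insert _ <|
    noBigIndep_of_subset_edgeUnion
      (insert_subset (mem_edgeUnion.2 (Or.inr (by rwa [add_sub_cancel_right]))) hSE) hElt
  have hEcard : E.card = n - 2 := by
    by_contra hne
    refine hu (mem_of_insert u (noBigIndep_of_subset_edgeUnion (B := insert u E) ?_ ?_))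
    · exact insert_subset (mem_edgeUnion.2 (Or.inl (mem_insert_self u E)))
        (hSE.trans (biUnion_subset_biUnion_of_subset_left _ (subset_insert u E)))
    · have := card_insert_le u E
      omega
  refine ⟨E, hEcard, edges_disjoint_of_cycIndep hE, hSE.antisymm fun x hx => ?_⟩
  rcases mem_edgeUnion.1 hx with h | h
  · exact hES h
  · simpa using hsucc _ h

theorem noBigIndep_of_isDisjointEdgeUnion (hn : 2 ≤ n) {S : Finset (ZMod (2 * n))}
    (hS : IsDisjointEdgeUnion n S) : NoBigIndep n S := by
  obtain ⟨B, hB, -, rfl⟩ := hS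
  exact noBigIndep_of_subset_edgeUnion subset_rfl (by omega)

theorem eq_of_isDisjointEdgeUnion_of_subset (hn : 2 ≤ n) {S S' : Finset (ZMod (2 * n))}
    (hS : IsDisjointEdgeUnion n S) (hS' : NoBigIndep n S') (hSS' : S ⊆ S') : S = S' := by
  obtain ⟨B, hB, hdisj, rfl⟩ := hS
  by_contra hne
  obtain ⟨v, hvS', hv⟩ := exists_of_ssubset (hSS'.ssubset_of_ne hne)
  obtain ⟨T, hT, hTind, hTcard⟩ := exists_cycIndep_insert_edgeUnion hdisj hv
  exact hS' ⟨T, hT.trans (insert_subset hvS' hSS'), by omega, hTind⟩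

theorem card_of_isDisjointEdgeUnion {S : Finset (ZMod (2 * n))} (hS : IsDisjointEdgeUnion n S) :
    S.card = 2 * n - 4 := by
  obtain ⟨B, hB, hdisj, rfl⟩ := hS
  rw [← edgeUnion, card_edgeUnion hdisj, hB]
  omega

end EvenCycle

/-- For `n ≥ 3`, a set `S` of vertices of the cycle graph on `ℤ/2nℤ` is
maximal among vertex sets containing no independent set of size `n - 1` iff
`S` is a union of `n - 2` pairwise vertex-disjoint edges; in particular every
such maximal set has exactly `2n - 4` elements. -/
theorem maximal_noBigIndep_iff_edgeUnion (n : ℕ) (hn : 3 ≤ n) :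
    (∀ S : Finset (ZMod (2 * n)),
      (NoBigIndep n S ∧ ∀ S', NoBigIndep n S' → S ⊆ S' → S = S') ↔
        IsDisjointEdgeUnion n S) ∧
    (∀ S : Finset (ZMod (2 * n)),
      (NoBigIndep n S ∧ ∀ S', NoBigIndep n S' → S ⊆ S' → S = S') →
        S.card = 2 * n - 4) := by
  have : NeZero n := ⟨by omega⟩
  have maximal_iff (S : Finset (ZMod (2 * n))) :
      (NoBigIndep n S ∧ ∀ S', NoBigIndep n S' → S ⊆ S' → S = S') ↔ IsDisjointEdgeUnion n S :=
    ⟨fun h => EvenCycle.isDisjointEdgeUnion_of_maximal h.1 h.2, fun h =>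
      ⟨EvenCycle.noBigIndep_of_isDisjointEdgeUnion (by omega) h,
        fun _ hS' hSS' => EvenCycle.eq_of_isDisjointEdgeUnion_of_subset (by omega) h hS' hSS'⟩⟩
  exact ⟨maximal_iff, fun S hS => EvenCycle.card_of_isDisjointEdgeUnion ((maximal_iff S).1 hS)⟩
end
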